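/- arXiv:2402.00301 — 4 statements merged into one kernel-verified Lean document; each statement's English description precedes it below -/
import Mathlib

section
/- A projective collineation with four distinct fixed points, each three of which are noncollinear, is the identity: Let σ be a collineation (a bijection of the points, with an induced bijection σ' of the lines, such that a point X is incident with a line l if and only if σ(X) is incident with σ'(l)), and suppose σ is projective, i.e., for every line l the restriction of σ to the range of l is a projectivity onto the range of σ'(l), and for every point Q the restriction of σ' to the pencil Q* is a projectivity onto the pencil (σQ)*. If there exist four distinct points fixed by σ, each three of which are noncollinear, then σ is the identity on points. -/
open Configuration

universe u
variable (P L : Type u) [Membership P L]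

/-- Three points are collinear if some line passes through all three. -/
def Col (A B C : P) : Prop := ∃ l : L, A ∈ l ∧ B ∈ l ∧ C ∈ l

/-- Every line of `L` is incident with at least `n` distinct points. -/
def LinesHaveAtLeast (n : ℕ) : Prop :=
  ∀ l : L, ∃ s : Finset P, n ≤ s.card ∧ ∀ X ∈ s, X ∈ l

/-- An object of the plane: the range of a line or the pencil of a point. -/
inductive Obj (P L : Type u) where
  | range : L → Obj P L
  | pencil : P → Obj P L

/-- The carrier of an object: the points on the line, resp. the lines through
the point. -/
abbrev Obj.Carrier {P L : Type u} [Membership P L] : Obj P L → Type u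
  | .range l => {X : P // X ∈ l}
  | .pencil U => {k : L // U ∈ k}

/-- `f` is the perspectivity from the range of `l` to the range of `m` with
center `O`, a point outside both `l` and `m` : each point `X` of `l` is mapped
to the point `(OX)·m`, i.e. `O`, `X` and `f X` are collinear. -/
def IsRangePersp (l m : L) (f : {X : P // X ∈ l} → {Y : P // Y ∈ m}) : Prop :=
  ∃ O : P, O ∉ l ∧ O ∉ m ∧
    ∀ X : {X : P // X ∈ l}, ∃ k : L, O ∈ k ∧ (X : P) ∈ k ∧ ((f X : P)) ∈ k

/-- `f` is the elementary map from the pencil of `U` to the range of a line `l`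
not through `U` : each line `k` through `U` is sent to the point `k·l`. -/
def IsElemMap (U : P) (l : L) (f : {k : L // U ∈ k} → {X : P // X ∈ l}) : Prop :=
  U ∉ l ∧ ∀ k : {k : L // U ∈ k}, ((f k : P)) ∈ (k : L)

/-- `f` is the elementary map from the range of a line `l` to the pencil of a
point `U` outside `l` : each point `X` of `l` is sent to the line `UX`. -/
def IsElemInv (U : P) (l : L) (f : {X : P // X ∈ l} → {k : L // U ∈ k}) : Prop :=
  U ∉ l ∧ ∀ X : {X : P // X ∈ l}, (X : P) ∈ ((f X : L))

/-- A projectivity (between ranges or pencils) : a composite of finitely many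
perspectivities and elementary maps. -/
inductive IsProj : (a b : Obj P L) → (a.Carrier → b.Carrier) → Prop where
  | persp {l m : L} {f : {X : P // X ∈ l} → {Y : P // Y ∈ m}} :
      IsRangePersp P L l m f → IsProj (.range l) (.range m) f
  | elem {U : P} {l : L} {f : {k : L // U ∈ k} → {X : P // X ∈ l}} :
      IsElemMap P L U l f → IsProj (.pencil U) (.range l) f
  | elemInv {U : P} {l : L} {f : {X : P // X ∈ l} → {k : L // U ∈ k}} :
      IsElemInv P L U l f → IsProj (.range l) (.pencil U) f
  | comp {a b c : Obj P L} {f : a.Carrier → b.Carrier} {g : b.Carrier → c.Carrier} :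
      IsProj a b f → IsProj b c g → IsProj a c (g ∘ f)

/-- Axiom T: every projectivity of a range or a pencil onto itself having three
distinct fixed elements is the identity. -/
def AxiomT : Prop :=
  ∀ (a : Obj P L) (f : a.Carrier → a.Carrier), IsProj P L a a f →
    (∃ x y z : a.Carrier, x ≠ y ∧ x ≠ z ∧ y ≠ z ∧ f x = x ∧ f y = y ∧ f z = z) →
    ∀ w, f w = w

/-!
The four fixed points form a quadrangle, so the six lines joining them are fixed, and so are the
diagonal points where opposite sides meet. Each side of the triangle `ABC` thus carries three fixed
points, and Axiom T, applied to the restriction of `σ` to that side, fixes it pointwise. Finally a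
point `X` off the sides `AB` and `AC` is the meet of the lines `XA` and `XB`, each of which joins a
vertex to a fixed point of the opposite side, so both lines and hence `X` are fixed.
-/

section

variable {P L}

theorem Col.swap₁₂ {A B C : P} : Col P L A B C → Col P L B A C :=
  fun ⟨l, hA, hB, hC⟩ => ⟨l, hB, hA, hC⟩

theorem Col.swap₂₃ {A B C : P} : Col P L A B C → Col P L A C B :=
  fun ⟨l, hA, hB, hC⟩ => ⟨l, hA, hC, hB⟩

theorem AxiomT.apply_eq_self_of_range {l m : L} (hT : AxiomT P L) (hml : m = l)
    {f : {X : P // X ∈ l} → {Y : P // Y ∈ m}} (hf : IsProj P L (.range l) (.range m) f)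
    {x y z : {X : P // X ∈ l}} (hxy : x ≠ y) (hxz : x ≠ z) (hyz : y ≠ z)
    (hfx : (f x : P) = x) (hfy : (f y : P) = y) (hfz : (f z : P) = z)
    (w : {X : P // X ∈ l}) : (f w : P) = w := by
  subst hml
  exact congrArg Subtype.val <|
    hT (.range _) f hf
      ⟨x, y, z, hxy, hxz, hyz, Subtype.ext hfx, Subtype.ext hfy, Subtype.ext hfz⟩ w

def IsCollineation (σ : P ≃ P) (σ' : L ≃ L) : Prop :=
  ∀ (X : P) (l : L), X ∈ l ↔ σ X ∈ σ' l

namespace IsCollineation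

variable {σ : P ≃ P} {σ' : L ≃ L}

theorem mem_of_line_fixed (hσ : IsCollineation σ σ') {X : P} {l : L} (hl : σ' l = l)
    (hX : X ∈ l) : σ X ∈ l :=
  hl ▸ (hσ X l).mp hX

theorem line_fixed_of_two_fixed [Nondegenerate P L] (hσ : IsCollineation σ σ') {x y : P}
    {l : L} (hxy : x ≠ y) (hx : σ x = x) (hy : σ y = y) (hxl : x ∈ l) (hyl : y ∈ l) :
    σ' l = l :=
  (Nondegenerate.eq_or_eq (hx ▸ (hσ x l).mp hxl) (hy ▸ (hσ y l).mp hyl) hxl hyl).resolve_left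
    hxy

theorem point_fixed_of_two_lines_fixed [Nondegenerate P L] (hσ : IsCollineation σ σ') {p : P}
    {l m : L} (hlm : l ≠ m) (hl : σ' l = l) (hm : σ' m = m) (hpl : p ∈ l) (hpm : p ∈ m) :
    σ p = p :=
  (Nondegenerate.eq_or_eq (hσ.mem_of_line_fixed hl hpl) hpl (hσ.mem_of_line_fixed hm hpm)
    hpm).resolve_right hlm

theorem fixed_of_mem_of_three_fixed (hT : AxiomT P L) (hσ : IsCollineation σ σ') {l : L}
    (hproj : IsProj P L (.range l) (.range (σ' l)) (fun X => ⟨σ X.1, (hσ X.1 l).mp X.2⟩))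
    (hl : σ' l = l) {x y z : P} (hxy : x ≠ y) (hxz : x ≠ z) (hyz : y ≠ z)
    (hxl : x ∈ l) (hyl : y ∈ l) (hzl : z ∈ l) (hx : σ x = x) (hy : σ y = y) (hz : σ z = z)
    {w : P} (hwl : w ∈ l) : σ w = w :=
  hT.apply_eq_self_of_range hl hproj (x := ⟨x, hxl⟩) (y := ⟨y, hyl⟩) (z := ⟨z, hzl⟩)
    (Subtype.coe_ne_coe.mp hxy) (Subtype.coe_ne_coe.mp hxz) (Subtype.coe_ne_coe.mp hyz)
    hx hy hz ⟨w, hwl⟩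

theorem line_fixed_of_mem_of_pointwise_fixed [HasPoints P L] (hσ : IsCollineation σ σ')
    {A : P} {k m : L} (hA : σ A = A) (hAk : A ∈ k) (hAm : A ∉ m)
    (hm : ∀ {X : P}, X ∈ m → σ X = X) : σ' k = k := by
  have hkm : k ≠ m := fun h => hAm (h ▸ hAk)
  obtain ⟨hEk, hEm⟩ := HasPoints.mkPoint_ax (P := P) hkm
  exact hσ.line_fixed_of_two_fixed (by rintro rfl; exact hAm hEm) hA (hm hEm) hAk hEk

theorem fixed_of_mem_side_of_quadrangle [ProjectivePlane P L] (hT : AxiomT P L)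
    (hσ : IsCollineation σ σ')
    (hproj : ∀ l : L,
      IsProj P L (.range l) (.range (σ' l)) (fun X => ⟨σ X.1, (hσ X.1 l).mp X.2⟩))
    {A B C D : P} (hAB : A ≠ B) (hCD : C ≠ D) (hABC : ¬ Col P L A B C)
    (hACD : ¬ Col P L A C D) (hBCD : ¬ Col P L B C D)
    (hA : σ A = A) (hB : σ B = B) (hC : σ C = C) (hD : σ D = D)
    {l : L} (hAl : A ∈ l) (hBl : B ∈ l) {X : P} (hXl : X ∈ l) : σ X = X := by
  obtain ⟨hCm, hDm⟩ := HasLines.mkLine_ax (L := L) hCD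
  set m : L := HasLines.mkLine hCD
  have hlm : l ≠ m := fun h => hABC ⟨l, hAl, hBl, h ▸ hCm⟩
  obtain ⟨hEl, hEm⟩ := HasPoints.mkPoint_ax (P := P) hlm
  set E : P := HasPoints.mkPoint hlm
  have hl : σ' l = l := hσ.line_fixed_of_two_fixed hAB hA hB hAl hBl
  have hm : σ' m = m := hσ.line_fixed_of_two_fixed hCD hC hD hCm hDm
  have hE : σ E = E := hσ.point_fixed_of_two_lines_fixed hlm hl hm hEl hEm
  have hAE : A ≠ E := fun h => hACD ⟨m, h ▸ hEm, hCm, hDm⟩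
  have hBE : B ≠ E := fun h => hBCD ⟨m, h ▸ hEm, hCm, hDm⟩
  exact hσ.fixed_of_mem_of_three_fixed hT (hproj l) hl hAB hAE hBE hAl hBl hEl hA hB hE hXl

theorem fixed_of_sides_fixed [ProjectivePlane P L] (hσ : IsCollineation σ σ') {A B C : P}
    (hAB : A ≠ B) (hABC : ¬ Col P L A B C)
    (hsAB : ∀ {l : L}, A ∈ l → B ∈ l → ∀ {X : P}, X ∈ l → σ X = X)
    (hsAC : ∀ {l : L}, A ∈ l → C ∈ l → ∀ {X : P}, X ∈ l → σ X = X)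
    (hsBC : ∀ {l : L}, B ∈ l → C ∈ l → ∀ {X : P}, X ∈ l → σ X = X) (X : P) :
    σ X = X := by
  obtain ⟨hA_AB, hB_AB⟩ := HasLines.mkLine_ax (L := L) hAB
  by_cases hX_AB : X ∈ HasLines.mkLine (L := L) hAB
  · exact hsAB hA_AB hB_AB hX_AB
  have hAC : A ≠ C := fun h => hABC ⟨_, hA_AB, hB_AB, h ▸ hA_AB⟩
  have hBC : B ≠ C := fun h => hABC ⟨_, hA_AB, hB_AB, h ▸ hB_AB⟩
  obtain ⟨hA_AC, hC_AC⟩ := HasLines.mkLine_ax (L := L) hAC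
  by_cases hX_AC : X ∈ HasLines.mkLine (L := L) hAC
  · exact hsAC hA_AC hC_AC hX_AC
  obtain ⟨hB_BC, hC_BC⟩ := HasLines.mkLine_ax (L := L) hBC
  have hXA : X ≠ A := fun h => hX_AB (h ▸ hA_AB)
  have hXB : X ≠ B := fun h => hX_AB (h ▸ hB_AB)
  obtain ⟨hX_XA, hA_XA⟩ := HasLines.mkLine_ax (L := L) hXA
  obtain ⟨hX_XB, hB_XB⟩ := HasLines.mkLine_ax (L := L) hXB
  set lXA : L := HasLines.mkLine hXA
  set lXB : L := HasLines.mkLine hXB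
  have hXA_fixed : σ' lXA = lXA :=
    hσ.line_fixed_of_mem_of_pointwise_fixed (hsAB hA_AB hB_AB hA_AB) hA_XA
      (fun h => hABC ⟨_, h, hB_BC, hC_BC⟩) (hsBC hB_BC hC_BC)
  have hXB_fixed : σ' lXB = lXB :=
    hσ.line_fixed_of_mem_of_pointwise_fixed (hsAB hA_AB hB_AB hB_AB) hB_XB
      (fun h => hABC ⟨_, hA_AC, h, hC_AC⟩) (hsAC hA_AC hC_AC)
  have hXA_ne_XB : lXA ≠ lXB := by
    intro h
    have hAB_eq : HasLines.mkLine hAB = lXA :=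
      (Nondegenerate.eq_or_eq hA_AB hB_AB hA_XA (h ▸ hB_XB)).resolve_left hAB
    exact hX_AB (hAB_eq ▸ hX_XA)
  exact hσ.point_fixed_of_two_lines_fixed hXA_ne_XB hXA_fixed hXB_fixed hX_XA hX_XB

end IsCollineation

end

theorem projective_collineation_four_fixed_points
    [Configuration.ProjectivePlane P L]
    (hT : AxiomT P L)
    (σ : P ≃ P) (σ' : L ≃ L)
    (hcompat : ∀ (X : P) (l : L), X ∈ l ↔ σ X ∈ σ' l)
    (hprojR : ∀ l : L,
      IsProj P L (.range l) (.range (σ' l))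
        (fun X : {X : P // X ∈ l} => (⟨σ X.1, (hcompat X.1 l).mp X.2⟩ : {Y : P // Y ∈ σ' l})))
    (A B C D : P)
    (hAB : A ≠ B) (hAC : A ≠ C) (hAD : A ≠ D) (hBC : B ≠ C) (hBD : B ≠ D) (hCD : C ≠ D)
    (hABC : ¬ Col P L A B C) (hABD : ¬ Col P L A B D)
    (hACD : ¬ Col P L A C D) (hBCD : ¬ Col P L B C D)
    (hA : σ A = A) (hB : σ B = B) (hC : σ C = C) (hD : σ D = D) :
    ∀ X : P, σ X = X := by
  have hσ : IsCollineation σ σ' := hcompat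
  exact hσ.fixed_of_sides_fixed hAB hABC
    (hσ.fixed_of_mem_side_of_quadrangle hT hprojR hAB hCD hABC hACD hBCD hA hB hC hD)
    (hσ.fixed_of_mem_side_of_quadrangle hT hprojR hAC hBD (mt Col.swap₂₃ hABC) hABD
      (mt Col.swap₁₂ hBCD) hA hC hB hD)
    (hσ.fixed_of_mem_side_of_quadrangle hT hprojR hBC hAD
      (mt (Col.swap₁₂ ∘ Col.swap₂₃) hABC) (mt Col.swap₁₂ hABD) (mt Col.swap₁₂ hACD)
      hB hC hA hD)
end

section
/- Pascal's Theorem: Let ABCDEF be a simple hexagon inscribed in a conic κ, i.e., A, B, C, D, E, F are six distinct points of κ. Then the pairs of opposite sides (AB, DE), (BC, EF), (CD, FA) consist of distinct lines, and the three points of intersection AB·DE, BC·EF, CD·FA are pairwise distinct and collinear. -/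
open Configuration

universe u
variable (P L : Type u) [Membership P L]

/-- The Steiner conic `κ(π;U,V)` defined by a projectivity `π : U* → V*` :
the locus of points `l·π(l)` for `l` a line through `U`. -/
def conicSet (U V : P) (π : {k : L // U ∈ k} → {k : L // V ∈ k}) : Set P :=
  {X : P | ∃ k : {k : L // U ∈ k}, X ∈ (k : L) ∧ X ∈ ((π k : L))}

/-- A conic: the Steiner conic of some nonperspective projectivity between the
pencils of two distinct points. -/
def IsConic (κ : Set P) : Prop :=
  ∃ (U V : P) (π : {k : L // U ∈ k} → {k : L // V ∈ k}),
    U ≠ V ∧ IsProj P L (.pencil U) (.pencil V) π ∧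
    (∀ k : {k : L // U ∈ k}, ((π k : L)) ≠ (k : L)) ∧
    κ = conicSet P L U V π

/-- A line `t` is tangent to `κ` at `Q` if `Q` is on `κ` and on `t`, and is the
only point of `κ` incident with `t`. -/
def IsTangent (κ : Set P) (t : L) (Q : P) : Prop :=
  Q ∈ κ ∧ Q ∈ t ∧ ∀ X ∈ κ, X ∈ t → X = Q

/-- A line is a secant of `κ` if it passes through two distinct points of `κ`. -/
def IsSecant (κ : Set P) (s : L) : Prop :=
  ∃ X Y : P, X ≠ Y ∧ X ∈ κ ∧ Y ∈ κ ∧ X ∈ s ∧ Y ∈ s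

/-- Axiom P: the tangents to a conic at any three distinct points of the conic
are nonconcurrent. -/
def AxiomP : Prop :=
  ∀ κ : Set P, IsConic P L κ →
    ∀ X Y Z : P, X ∈ κ → Y ∈ κ → Z ∈ κ → X ≠ Y → X ≠ Z → Y ≠ Z →
      ∀ tx ty tz : L, IsTangent P L κ tx X → IsTangent P L κ ty Y → IsTangent P L κ tz Z →
        ¬ ∃ W : P, W ∈ tx ∧ W ∈ ty ∧ W ∈ tz

/-!
By Axiom T a Steiner conic `κ` meets every line in at most two points. Call distinct points
`U, V` of `κ` a Steiner pair if some projectivity `U* → V*` sends `UX` to `VX` for every other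
point `X` of `κ`. If `(B, F)` is a Steiner pair, the projectivity `DE → B* → F* → CD` fixes
`D`, so by Axiom T it is a perspectivity. It sends `BC·DE` to `C` and `E` into `EF`, so its
center is `BC·EF`; and it sends `AB·DE` to `CD·FA`, which proves Pascal's theorem for such
hexagons. Applied to auxiliary hexagons it lets one move the base points of a Steiner pair one
at a time, so that any two distinct points of `κ` form a Steiner pair.
-/

theorem exists_pair_mem_sdiff {α : Type*} {s t : Set α} (ht : t.Finite)
    (h : t.encard + 2 ≤ s.encard) : ∃ x ∈ s \ t, ∃ y ∈ s \ t, x ≠ y := by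
  have h2 : 2 ≤ (s \ t).encard := (ENat.add_le_add_iff_left ht.encard_lt_top.ne).1
    (h.trans ((Set.encard_le_encard_sdiff_add_encard s t).trans_eq (add_comm _ _)))
  obtain ⟨x, y, hx, hy, hxy⟩ := Set.one_lt_encard_iff.1 (lt_of_lt_of_le (by norm_num) h2)
  exact ⟨x, hx, y, hy, hxy⟩

section Incidence

variable {P L}

theorem point_eq_of_mem_of_ne [Nondegenerate P L] {X Y : P} {l m : L} (hlm : l ≠ m)
    (hXl : X ∈ l) (hXm : X ∈ m) (hYl : Y ∈ l) (hYm : Y ∈ m) : X = Y :=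
  (Nondegenerate.eq_or_eq hXl hYl hXm hYm).resolve_right hlm

theorem line_eq_of_mem_of_ne [Nondegenerate P L] {X Y : P} {l m : L} (hXY : X ≠ Y)
    (hXl : X ∈ l) (hYl : Y ∈ l) (hXm : X ∈ m) (hYm : Y ∈ m) : l = m :=
  (Nondegenerate.eq_or_eq hXl hYl hXm hYm).resolve_left hXY

theorem exists_line_of_ne [HasLines P L] {X Y : P} (h : X ≠ Y) : ∃ l : L, X ∈ l ∧ Y ∈ l :=
  ⟨_, HasLines.mkLine_ax h⟩

theorem exists_point_of_ne [HasPoints P L] {l m : L} (h : l ≠ m) : ∃ X : P, X ∈ l ∧ X ∈ m :=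
  ⟨_, HasPoints.mkPoint_ax h⟩

theorem LinesHaveAtLeast.mono {m n : ℕ} (hn : LinesHaveAtLeast P L n) (hmn : m ≤ n) :
    LinesHaveAtLeast P L m :=
  fun l => (hn l).imp fun _ hs => ⟨hmn.trans hs.1, hs.2⟩

theorem LinesHaveAtLeast.le_encard {n : ℕ} (hn : LinesHaveAtLeast P L n) (l : L) :
    (n : ℕ∞) ≤ {X : P | X ∈ l}.encard := by
  obtain ⟨s, hcard, hs⟩ := hn l
  calc (n : ℕ∞) ≤ (s : Set P).encard := by simpa using hcard
    _ ≤ _ := Set.encard_le_encard hs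

end Incidence

section Maps

variable {P L}

def IsPerspCenter (O : P) (l m : L) (f : {X : P // X ∈ l} → {Y : P // Y ∈ m}) : Prop :=
  O ∉ l ∧ O ∉ m ∧ ∀ X : {X : P // X ∈ l}, ∃ k : L, O ∈ k ∧ (X : P) ∈ k ∧ (f X : P) ∈ k

theorem IsPerspCenter.isRangePersp {O : P} {l m : L} {f : {X : P // X ∈ l} → {Y : P // Y ∈ m}}
    (hf : IsPerspCenter O l m f) : IsRangePersp P L l m f :=
  ⟨O, hf⟩

variable [Nondegenerate P L]

theorem IsPerspCenter.apply_eq {O : P} {l m : L} {f : {X : P // X ∈ l} → {Y : P // Y ∈ m}}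
    (hf : IsPerspCenter O l m f) (X : {X : P // X ∈ l}) {Y : P} (hYm : Y ∈ m)
    (hOXY : Col P L O X Y) : (f X : P) = Y := by
  obtain ⟨k, hOk, hXk, hYk⟩ := hOXY
  obtain ⟨k', hOk', hXk', hfk'⟩ := hf.2.2 X
  obtain rfl := line_eq_of_mem_of_ne (ne_of_mem_of_not_mem X.2 hf.1).symm hOk' hXk' hOk hXk
  exact point_eq_of_mem_of_ne (ne_of_mem_of_not_mem' hOk' hf.2.1) hfk' (f X).2 hYk hYm

theorem IsElemMap.apply_eq {U : P} {l : L} {f : {k : L // U ∈ k} → {X : P // X ∈ l}}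
    (hf : IsElemMap P L U l f) (k : {k : L // U ∈ k}) {X : P} (hXk : X ∈ (k : L))
    (hXl : X ∈ l) : (f k : P) = X :=
  point_eq_of_mem_of_ne (ne_of_mem_of_not_mem' k.2 hf.1) (hf.2 k) (f k).2 hXk hXl

theorem IsElemInv.apply_eq {U : P} {l : L} {f : {X : P // X ∈ l} → {k : L // U ∈ k}}
    (hf : IsElemInv P L U l f) (X : {X : P // X ∈ l}) {k : L} (hUk : U ∈ k)
    (hXk : (X : P) ∈ k) : (f X : L) = k :=
  line_eq_of_mem_of_ne (ne_of_mem_of_not_mem X.2 hf.1).symm (f X).2 (hf.2 X) hUk hXk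

end Maps

section Projectivities

variable {P L} [ProjectivePlane P L]

theorem exists_isPerspCenter {O : P} {l m : L} (hOl : O ∉ l) (hOm : O ∉ m) :
    ∃ f : {X : P // X ∈ l} → {Y : P // Y ∈ m}, IsPerspCenter O l m f := by
  have (X : {X : P // X ∈ l}) :
      ∃ Y : {Y : P // Y ∈ m}, ∃ k : L, O ∈ k ∧ (X : P) ∈ k ∧ (Y : P) ∈ k := by
    obtain ⟨k, hOk, hXk⟩ := exists_line_of_ne (L := L) (ne_of_mem_of_not_mem X.2 hOl).symm
    obtain ⟨Y, hYk, hYm⟩ := exists_point_of_ne (P := P) (ne_of_mem_of_not_mem' hOk hOm)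
    exact ⟨⟨Y, hYm⟩, k, hOk, hXk, hYk⟩
  choose f hf using this
  exact ⟨f, hOl, hOm, hf⟩

theorem exists_isElemMap {U : P} {l : L} (hU : U ∉ l) :
    ∃ f : {k : L // U ∈ k} → {X : P // X ∈ l}, IsElemMap P L U l f := by
  have (k : {k : L // U ∈ k}) : ∃ X : {X : P // X ∈ l}, (X : P) ∈ (k : L) :=
    let ⟨X, hXk, hXl⟩ := exists_point_of_ne (P := P) (ne_of_mem_of_not_mem' k.2 hU)
    ⟨⟨X, hXl⟩, hXk⟩
  choose f hf using this
  exact ⟨f, hU, hf⟩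

theorem exists_isElemInv {U : P} {l : L} (hU : U ∉ l) :
    ∃ f : {X : P // X ∈ l} → {k : L // U ∈ k}, IsElemInv P L U l f := by
  have (X : {X : P // X ∈ l}) : ∃ k : {k : L // U ∈ k}, (X : P) ∈ (k : L) :=
    let ⟨k, hUk, hXk⟩ := exists_line_of_ne (L := L) (ne_of_mem_of_not_mem X.2 hU).symm
    ⟨⟨k, hUk⟩, hXk⟩
  choose f hf using this
  exact ⟨f, hU, hf⟩

theorem IsProj.exists_inverse {a b : Obj P L} {f : a.Carrier → b.Carrier} (hf : IsProj P L a b f) :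
    ∃ g : b.Carrier → a.Carrier, IsProj P L b a g ∧
      Function.LeftInverse g f ∧ Function.RightInverse g f := by
  induction hf with
  | persp hf =>
    obtain ⟨O, hOl, hOm, hcol⟩ := hf
    obtain ⟨g, hg⟩ := exists_isPerspCenter hOm hOl
    refine ⟨g, .persp hg.isRangePersp, fun X => Subtype.ext ?_, fun Y => Subtype.ext ?_⟩
    · obtain ⟨k, hOk, hXk, hfXk⟩ := hcol X
      exact hg.apply_eq _ X.2 ⟨k, hOk, hfXk, hXk⟩
    · obtain ⟨k, hOk, hYk, hgYk⟩ := hg.2.2 Y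
      exact IsPerspCenter.apply_eq ⟨hOl, hOm, hcol⟩ _ Y.2 ⟨k, hOk, hgYk, hYk⟩
  | elem hf =>
    obtain ⟨g, hg⟩ := exists_isElemInv hf.1
    exact ⟨g, .elemInv hg, fun k => Subtype.ext (hg.apply_eq _ k.2 (hf.2 k)),
      fun X => Subtype.ext (hf.apply_eq _ (hg.2 X) X.2)⟩
  | elemInv hf =>
    obtain ⟨g, hg⟩ := exists_isElemMap hf.1
    exact ⟨g, .elem hg, fun X => Subtype.ext (hg.apply_eq _ (hf.2 X) X.2),
      fun k => Subtype.ext (hf.apply_eq _ k.2 (hg.2 k))⟩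
  | comp _ _ ih₁ ih₂ =>
    obtain ⟨f', hf', hlf, hrf⟩ := ih₁
    obtain ⟨g', hg', hlg, hrg⟩ := ih₂
    exact ⟨f' ∘ g', .comp hg' hf', hlg.comp hlf, hrg.comp hrf⟩

theorem IsProj.injective {a b : Obj P L} {f : a.Carrier → b.Carrier} (hf : IsProj P L a b f) :
    Function.Injective f :=
  let ⟨_, _, hl, _⟩ := hf.exists_inverse
  hl.injective

theorem AxiomT.eq_of_eqOn_three (hT : AxiomT P L) {a b : Obj P L}
    {f g : a.Carrier → b.Carrier} (hf : IsProj P L a b f) (hg : IsProj P L a b g)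
    {x y z : a.Carrier} (hxy : x ≠ y) (hxz : x ≠ z) (hyz : y ≠ z)
    (hx : f x = g x) (hy : f y = g y) (hz : f z = g z) : f = g := by
  obtain ⟨g', hg', hl, hr⟩ := hg.exists_inverse
  have hid := hT a (g' ∘ f) (.comp hf hg')
    ⟨x, y, z, hxy, hxz, hyz, by simp [hx, hl x], by simp [hy, hl y], by simp [hz, hl z]⟩
  funext w
  rw [← hr (f w)]
  exact congrArg g (hid w)

end Projectivities

section Perspectivities

variable {P L} [ProjectivePlane P L]

theorem exists_center_of_ne {l m : L} {A B A' B' : P} (hAl : A ∈ l) (hBl : B ∈ l)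
    (hA'm : A' ∈ m) (hB'm : B' ∈ m) (hAB : A ≠ B) (hA'B' : A' ≠ B') (hAm : A ∉ m) (hBm : B ∉ m)
    (hA'l : A' ∉ l) (hB'l : B' ∉ l) :
    ∃ O : P, O ∉ l ∧ O ∉ m ∧ Col P L O A A' ∧ Col P L O B B' := by
  obtain ⟨a, hAa, hA'a⟩ := exists_line_of_ne (L := L) (ne_of_mem_of_not_mem hAl hA'l)
  obtain ⟨b, hBb, hB'b⟩ := exists_line_of_ne (L := L) (ne_of_mem_of_not_mem hBl hB'l)
  have hal : a ≠ l := ne_of_mem_of_not_mem' hA'a hA'l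
  have hbl : b ≠ l := ne_of_mem_of_not_mem' hB'b hB'l
  have hab : a ≠ b := fun h => hal (line_eq_of_mem_of_ne hAB hAa (h ▸ hBb) hAl hBl)
  obtain ⟨O, hOa, hOb⟩ := exists_point_of_ne (P := P) hab
  refine ⟨O, fun hOl => hAB ?_, fun hOm => hA'B' ?_, ⟨a, hOa, hAa, hA'a⟩, ⟨b, hOb, hBb, hB'b⟩⟩
  · exact (point_eq_of_mem_of_ne hal hOa hOl hAa hAl).symm.trans
      (point_eq_of_mem_of_ne hbl hOb hOl hBb hBl)
  · exact (point_eq_of_mem_of_ne (ne_of_mem_of_not_mem' hAa hAm) hOa hOm hA'a hA'm).symm.trans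
      (point_eq_of_mem_of_ne (ne_of_mem_of_not_mem' hBb hBm) hOb hOm hB'b hB'm)

/-- The center is `A f(A) · B f(B)` for two further points `A, B` of `l`: by Axiom T, `f` agrees
with the perspectivity from that center, since both fix `c` and send `A, B` to `f(A), f(B)`. -/
theorem IsProj.isRangePersp_of_fixes (h3 : LinesHaveAtLeast P L 3) (hT : AxiomT P L) {l m : L}
    (hlm : l ≠ m) {f : {X : P // X ∈ l} → {Y : P // Y ∈ m}}
    (hf : IsProj P L (.range l) (.range m) f) {c : P} (hcl : c ∈ l) (hcm : c ∈ m)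
    (hfc : (f ⟨c, hcl⟩ : P) = c) : IsRangePersp P L l m f := by
  obtain ⟨A, ⟨hAl, hAc⟩, B, ⟨hBl, hBc⟩, hAB⟩ := exists_pair_mem_sdiff (Set.finite_singleton c)
    (s := {X : P | X ∈ l}) (by norm_num; exact h3.le_encard l)
  have hoff (X : {X : P // X ∈ l}) (hXc : (X : P) ≠ c) :
      (X : P) ∉ m ∧ (f X : P) ∉ l := by
    refine ⟨fun hXm => hXc (point_eq_of_mem_of_ne hlm X.2 hXm hcl hcm), fun hfX => hXc ?_⟩
    have : f X = f ⟨c, hcl⟩ :=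
      Subtype.ext ((point_eq_of_mem_of_ne hlm hfX (f X).2 hcl hcm).trans hfc.symm)
    exact congrArg Subtype.val (hf.injective this)
  obtain ⟨hAm, hfAl⟩ := hoff ⟨A, hAl⟩ hAc
  obtain ⟨hBm, hfBl⟩ := hoff ⟨B, hBl⟩ hBc
  have hfAB : (f ⟨A, hAl⟩ : P) ≠ f ⟨B, hBl⟩ := fun h =>
    hAB (congrArg Subtype.val (hf.injective (Subtype.ext h)))
  obtain ⟨O, hOl, hOm, hOA, hOB⟩ :=
    exists_center_of_ne (l := l) (m := m) hAl hBl (f _).2 (f _).2 hAB hfAB hAm hBm hfAl hfBl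
  obtain ⟨p, hp⟩ := exists_isPerspCenter hOl hOm
  have hcO : Col P L O c c :=
    let ⟨k, hOk, hck⟩ := exists_line_of_ne (L := L) (ne_of_mem_of_not_mem hcl hOl).symm
    ⟨k, hOk, hck, hck⟩
  have : f = p := hT.eq_of_eqOn_three hf (.persp hp.isRangePersp)
    (x := ⟨A, hAl⟩) (y := ⟨B, hBl⟩) (z := ⟨c, hcl⟩)
    (by simpa using hAB) (by simpa using hAc) (by simpa using hBc)
    (Subtype.ext (hp.apply_eq _ (f _).2 hOA).symm) (Subtype.ext (hp.apply_eq _ (f _).2 hOB).symm)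
    (Subtype.ext (hfc.trans (hp.apply_eq _ hcm hcO).symm))
  exact this ▸ hp.isRangePersp

end Perspectivities

section Conic

variable {P L}

variable (L) in
def IsArc (κ : Set P) : Prop :=
  ∀ s : L, ∀ X ∈ κ, ∀ Y ∈ κ, ∀ Z ∈ κ, X ∈ s → Y ∈ s → Z ∈ s → X = Y ∨ X = Z ∨ Y = Z

theorem IsArc.notMem {κ : Set P} (hκ : IsArc L κ) {A B C : P} (hA : A ∈ κ) (hB : B ∈ κ)
    (hC : C ∈ κ) (hAB : A ≠ B) (hAC : A ≠ C) (hBC : B ≠ C) {s : L} (hBs : B ∈ s) (hCs : C ∈ s) :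
    A ∉ s := fun hAs => by
  rcases hκ s A hA B hB C hC hAs hBs hCs with h | h | h
  exacts [hAB h, hAC h, hBC h]

variable {U V : P} {π : {k : L // U ∈ k} → {k : L // V ∈ k}}

theorem conicSet_eq_of_inverse {g : {k : L // V ∈ k} → {k : L // U ∈ k}}
    (hl : Function.LeftInverse g π) (hr : Function.RightInverse g π) :
    conicSet P L U V π = conicSet P L V U g := by
  ext X
  constructor
  · rintro ⟨k, hXk, hXπk⟩
    exact ⟨π k, hXπk, by rwa [hl k]⟩
  · rintro ⟨k, hXk, hXgk⟩
    exact ⟨g k, hXgk, by rwa [hr k]⟩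

variable [ProjectivePlane P L]

theorem mem_apply_of_mem_conicSet {X : P} (hX : X ∈ conicSet P L U V π) (hXU : X ≠ U)
    (k : {k : L // U ∈ k}) (hXk : X ∈ (k : L)) : X ∈ (π k : L) := by
  obtain ⟨k₀, hXk₀, hXπk₀⟩ := hX
  obtain rfl : k₀ = k := Subtype.ext (line_eq_of_mem_of_ne hXU.symm k₀.2 hXk₀ k.2 hXk)
  exact hXπk₀

theorem right_mem_conicSet (hUV : U ≠ V) : V ∈ conicSet P L U V π :=
  let ⟨k, hUk, hVk⟩ := exists_line_of_ne (L := L) hUV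
  ⟨⟨k, hUk⟩, hVk, (π _).2⟩

theorem left_mem_conicSet (hUV : U ≠ V) (hπ : IsProj P L (.pencil U) (.pencil V) π) :
    U ∈ conicSet P L U V π := by
  obtain ⟨g, -, hl, hr⟩ := hπ.exists_inverse
  rw [conicSet_eq_of_inverse hl hr]
  exact right_mem_conicSet hUV.symm

theorem eq_of_mem_conicSet_of_mem_line (hnp : ∀ k : {k : L // U ∈ k}, (π k : L) ≠ k) {s : L}
    (hUs : U ∈ s) {X Y : P} (hX : X ∈ conicSet P L U V π) (hY : Y ∈ conicSet P L U V π)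
    (hXs : X ∈ s) (hYs : Y ∈ s) (hXU : X ≠ U) (hYU : Y ≠ U) : X = Y := by
  by_contra hXY
  exact hnp ⟨s, hUs⟩ (line_eq_of_mem_of_ne hXY (mem_apply_of_mem_conicSet hX hXU _ hXs)
    (mem_apply_of_mem_conicSet hY hYU _ hYs) hXs hYs)

theorem eq_or_eq_or_eq_of_mem_line_of_left_mem (hnp : ∀ k : {k : L // U ∈ k}, (π k : L) ≠ k)
    {s : L} (hUs : U ∈ s) {X Y Z : P} (hX : X ∈ conicSet P L U V π)
    (hY : Y ∈ conicSet P L U V π) (hZ : Z ∈ conicSet P L U V π) (hXs : X ∈ s) (hYs : Y ∈ s)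
    (hZs : Z ∈ s) : X = Y ∨ X = Z ∨ Y = Z := by
  have h := fun {A B : P} => eq_of_mem_conicSet_of_mem_line (X := A) (Y := B) hnp hUs
  by_cases hXU : X = U <;> by_cases hYU : Y = U <;> by_cases hZU : Z = U <;> grind

theorem isArc_conicSet (hT : AxiomT P L) (hUV : U ≠ V)
    (hπ : IsProj P L (.pencil U) (.pencil V) π) (hnp : ∀ k : {k : L // U ∈ k}, (π k : L) ≠ k) :
    IsArc L (conicSet P L U V π) := by
  obtain ⟨g, -, hl, hr⟩ := hπ.exists_inverse
  intro s X hX Y hY Z hZ hXs hYs hZs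
  by_cases hUs : U ∈ s
  · exact eq_or_eq_or_eq_of_mem_line_of_left_mem hnp hUs hX hY hZ hXs hYs hZs
  by_cases hVs : V ∈ s
  · rw [conicSet_eq_of_inverse hl hr] at hX hY hZ
    have hnpg (k : {k : L // V ∈ k}) : (g k : L) ≠ k := fun h =>
      hnp (g k) (by rw [hr k]; exact h.symm)
    exact eq_or_eq_or_eq_of_mem_line_of_left_mem hnpg hVs hX hY hZ hXs hYs hZs
  by_contra! hXYZ
  obtain ⟨i, hi⟩ := exists_isElemInv hUs
  obtain ⟨e, he⟩ := exists_isElemMap hVs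
  have hfix (W : {W : P // W ∈ s}) (hW : (W : P) ∈ conicSet P L U V π) : e (π (i W)) = W :=
    Subtype.ext (he.apply_eq _
      (mem_apply_of_mem_conicSet hW (ne_of_mem_of_not_mem W.2 hUs) _ (hi.2 W)) W.2)
  -- `e ∘ π ∘ i` fixes the points of the conic on `s`, so by Axiom T all of `s` lies on the
  -- conic; but `UV·s` cannot, since `UV` already meets the conic in `U` and `V`
  have hid := hT (.range s) (e ∘ π ∘ i) (.comp (.comp (.elemInv hi) hπ) (.elem he))
    ⟨⟨X, hXs⟩, ⟨Y, hYs⟩, ⟨Z, hZs⟩, by simpa using hXYZ.1, by simpa using hXYZ.2.1,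
      by simpa using hXYZ.2.2, hfix _ hX, hfix _ hY, hfix _ hZ⟩
  obtain ⟨t, hUt, hVt⟩ := exists_line_of_ne (L := L) hUV
  obtain ⟨W, hWt, hWs⟩ := exists_point_of_ne (P := P) (ne_of_mem_of_not_mem' hUt hUs)
  have hW : W ∈ conicSet P L U V π := by
    refine ⟨i ⟨W, hWs⟩, hi.2 _, ?_⟩
    have := he.2 (π (i ⟨W, hWs⟩))
    rwa [show e (π (i ⟨W, hWs⟩)) = ⟨W, hWs⟩ from hid _] at this
  have hWV := eq_of_mem_conicSet_of_mem_line hnp hUt hW (right_mem_conicSet hUV) hWt hVt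
    (ne_of_mem_of_not_mem hWs hUs) hUV.symm
  exact hVs (hWV ▸ hWs)

theorem le_encard_conicSet {n : ℕ} (hn : LinesHaveAtLeast P L n) (hUV : U ≠ V)
    (hπ : IsProj P L (.pencil U) (.pencil V) π) (hnp : ∀ k : {k : L // U ∈ k}, (π k : L) ≠ k) :
    (n : ℕ∞) ≤ (conicSet P L U V π).encard := by
  obtain ⟨l, hUl⟩ := Nondegenerate.exists_line (L := L) U
  obtain ⟨i, hi⟩ := exists_isElemInv hUl
  choose c hck hcπ using fun k : {k : L // U ∈ k} => exists_point_of_ne (P := P) (hnp k).symm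
  have hc : Function.Injective fun k => (⟨c k, k, hck k, hcπ k⟩ : conicSet P L U V π) := by
    intro k k' hkk'
    have hcc : c k = c k' := congrArg Subtype.val hkk'
    by_cases hU : c k = U
    · have hUπ (k : {k : L // U ∈ k}) (hk : c k = U) : U ∈ (π k : L) := hk ▸ hcπ k
      exact hπ.injective (Subtype.ext (line_eq_of_mem_of_ne hUV (hUπ k hU) (π k).2
        (hUπ k' (hcc ▸ hU)) (π k').2))
    · exact Subtype.ext (line_eq_of_mem_of_ne (Ne.symm hU) k.2 (hck k) k'.2 (hcc ▸ hck k'))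
  calc (n : ℕ∞) ≤ {X : P | X ∈ l}.encard := hn.le_encard l
    _ ≤ ENat.card {k : L // U ∈ k} := ENat.card_le_card_of_injective (IsProj.elemInv hi).injective
    _ ≤ (conicSet P L U V π).encard := ENat.card_le_card_of_injective hc

end Conic

section Pascal

variable {P L}

theorem col_pair [HasLines P L] {X Y : P} (h : X ≠ Y) : Col P L X Y Y :=
  let ⟨k, hXk, hYk⟩ := exists_line_of_ne (L := L) h
  ⟨k, hXk, hYk, hYk⟩

theorem IsPerspCenter.mem_of_mem [Nondegenerate P L] {O : P} {l m : L}
    {f : {X : P // X ∈ l} → {Y : P // Y ∈ m}} (hf : IsPerspCenter O l m f)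
    (X : {X : P // X ∈ l}) {n : L} (hXn : (X : P) ∈ n) (hfXn : (f X : P) ∈ n)
    (hXfX : (X : P) ≠ f X) : O ∈ n := by
  obtain ⟨k, hOk, hXk, hfXk⟩ := hf.2.2 X
  exact line_eq_of_mem_of_ne hXfX hXk hfXk hXn hfXn ▸ hOk

theorem IsArc.eq_of_mem_of_mem [Nondegenerate P L] {κ : Set P} (hκ : IsArc L κ) {A B C : P}
    (hA : A ∈ κ) (hB : B ∈ κ) (hC : C ∈ κ) (hAB : A ≠ B) (hAC : A ≠ C) (hBC : B ≠ C) {l m : L}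
    (hAl : A ∈ l) (hBl : B ∈ l) (hBm : B ∈ m) (hCm : C ∈ m) {X : P} (hXl : X ∈ l) (hXm : X ∈ m) :
    X = B :=
  point_eq_of_mem_of_ne (ne_of_mem_of_not_mem' hAl (hκ.notMem hA hB hC hAB hAC hBC hBm hCm))
    hXl hXm hBl hBm

variable (L) in
def IsSteinerPair (κ : Set P) (U V : P) : Prop :=
  U ≠ V ∧ ∃ φ : {k : L // U ∈ k} → {k : L // V ∈ k}, IsProj P L (.pencil U) (.pencil V) φ ∧
    ∀ X ∈ κ, X ≠ U → X ≠ V → ∀ k : {k : L // U ∈ k}, X ∈ (k : L) → X ∈ (φ k : L)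

variable [ProjectivePlane P L] {κ : Set P}

theorem isSteinerPair_conicSet {U V : P} {π : {k : L // U ∈ k} → {k : L // V ∈ k}}
    (hUV : U ≠ V) (hπ : IsProj P L (.pencil U) (.pencil V) π) :
    IsSteinerPair L (conicSet P L U V π) U V :=
  ⟨hUV, π, hπ, fun _ hX hXU _ k hXk => mem_apply_of_mem_conicSet hX hXU k hXk⟩

theorem IsSteinerPair.symm {U V : P} (hG : IsSteinerPair L κ U V) : IsSteinerPair L κ V U := by
  obtain ⟨hUV, φ, hφ, hφκ⟩ := hG
  obtain ⟨g, hg, hl, -⟩ := hφ.exists_inverse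
  refine ⟨hUV.symm, g, hg, fun X hX hXV hXU k hXk => ?_⟩
  obtain ⟨n, hUn, hXn⟩ := exists_line_of_ne (L := L) (Ne.symm hXU)
  have : φ ⟨n, hUn⟩ = k :=
    Subtype.ext (line_eq_of_mem_of_ne (Ne.symm hXV) (φ _).2 (hφκ X hX hXU hXV _ hXn) k.2 hXk)
  rw [← this, hl]
  exact hXn

/-- `ψ` is the projectivity `l → B* → F* → m`; it fixes `D`, hence is a perspectivity. -/
theorem IsSteinerPair.exists_perspectivity (h3 : LinesHaveAtLeast P L 3) (hT : AxiomT P L)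
    {B F D : P} (hG : IsSteinerPair L κ B F) (hD : D ∈ κ) (hBD : B ≠ D) (hDF : D ≠ F)
    {l m : L} (hlm : l ≠ m) (hBl : B ∉ l) (hFm : F ∉ m) (hDl : D ∈ l) (hDm : D ∈ m) :
    ∃ (ψ : {X : P // X ∈ l} → {Y : P // Y ∈ m}) (O : P), IsPerspCenter O l m ψ ∧
      ∀ (W : {X : P // X ∈ l}) (Q : P), Q ∈ κ → Q ≠ B → Q ≠ F → Col P L B W Q →
        ∀ n : L, F ∈ n → Q ∈ n → (ψ W : P) ∈ n := by
  obtain ⟨-, φ, hφ, hφκ⟩ := hG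
  obtain ⟨i, hi⟩ := exists_isElemInv hBl
  obtain ⟨e, he⟩ := exists_isElemMap hFm
  have hψ (W : {X : P // X ∈ l}) (Q : P) (hQ : Q ∈ κ) (hQB : Q ≠ B) (hQF : Q ≠ F)
      (hBWQ : Col P L B W Q) (n : L) (hFn : F ∈ n) (hQn : Q ∈ n) : (e (φ (i W)) : P) ∈ n := by
    obtain ⟨k, hBk, hWk, hQk⟩ := hBWQ
    have hik : i W = ⟨k, hBk⟩ := Subtype.ext (hi.apply_eq W hBk hWk)
    have hφn : (φ (i W) : L) = n := line_eq_of_mem_of_ne (Ne.symm hQF) (φ _).2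
      (hφκ Q hQ hQB hQF _ (hik ▸ hQk)) hFn hQn
    exact hφn ▸ he.2 _
  obtain ⟨n, hFn, hDn⟩ := exists_line_of_ne (L := L) (Ne.symm hDF)
  have hfix : (e (φ (i ⟨D, hDl⟩)) : P) = D :=
    point_eq_of_mem_of_ne (ne_of_mem_of_not_mem' hFn hFm)
      (hψ _ D hD hBD.symm hDF (col_pair hBD) n hFn hDn) (e _).2 hDn hDm
  obtain ⟨O, hO⟩ := IsProj.isRangePersp_of_fixes h3 hT hlm
    (.comp (.comp (.elemInv hi) hφ) (.elem he)) hDl hDm hfix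
  exact ⟨_, O, hO, hψ⟩

theorem IsSteinerPair.pascal (h3 : LinesHaveAtLeast P L 3) (hT : AxiomT P L) (hκ : IsArc L κ)
    {A B C D E F : P} (hAκ : A ∈ κ) (hBκ : B ∈ κ) (hCκ : C ∈ κ) (hDκ : D ∈ κ) (hEκ : E ∈ κ)
    (hFκ : F ∈ κ) (hAB : A ≠ B) (hAF : A ≠ F) (hBC : B ≠ C) (hBD : B ≠ D) (hBE : B ≠ E)
    (hBF : B ≠ F) (hCD : C ≠ D) (hCE : C ≠ E) (hCF : C ≠ F) (hDE : D ≠ E) (hDF : D ≠ F)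
    (hEF : E ≠ F) (hG : IsSteinerPair L κ B F)
    {lab lbc lcd lde lef lfa : L} (hAab : A ∈ lab) (hBab : B ∈ lab) (hBbc : B ∈ lbc)
    (hCbc : C ∈ lbc) (hCcd : C ∈ lcd) (hDcd : D ∈ lcd) (hDde : D ∈ lde) (hEde : E ∈ lde)
    (hEef : E ∈ lef) (hFef : F ∈ lef) (hFfa : F ∈ lfa) (hAfa : A ∈ lfa)
    {X Y Z : P} (hXab : X ∈ lab) (hXde : X ∈ lde) (hYbc : Y ∈ lbc) (hYef : Y ∈ lef)
    (hZcd : Z ∈ lcd) (hZfa : Z ∈ lfa) : Col P L X Y Z := by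
  have nBde : B ∉ lde := hκ.notMem hBκ hDκ hEκ hBD hBE hDE hDde hEde
  have nFcd : F ∉ lcd := hκ.notMem hFκ hCκ hDκ hCF.symm hDF.symm hCD hCcd hDcd
  have nEcd : E ∉ lcd := hκ.notMem hEκ hCκ hDκ hCE.symm hDE.symm hCD hCcd hDcd
  have nCde : C ∉ lde := hκ.notMem hCκ hDκ hEκ hCD hCE hDE hDde hEde
  obtain ⟨ψ, O, hO, hψ⟩ := hG.exists_perspectivity h3 hT hDκ hBD hDF
    (ne_of_mem_of_not_mem' hEde nEcd) nBde nFcd hDde hDcd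
  have hψX : (ψ ⟨X, hXde⟩ : P) = Z :=
    point_eq_of_mem_of_ne (ne_of_mem_of_not_mem' hFfa nFcd)
      (hψ _ A hAκ hAB hAF ⟨lab, hBab, hXab, hAab⟩ lfa hFfa hAfa) (ψ _).2 hZfa hZcd
  have hOef : O ∈ lef :=
    hO.mem_of_mem ⟨E, hEde⟩ hEef (hψ _ E hEκ hBE.symm hEF (col_pair hBE) lef hFef hEef)
      (ne_of_mem_of_not_mem (ψ _).2 nEcd).symm
  obtain ⟨M, hMbc, hMde⟩ := exists_point_of_ne (P := P) (ne_of_mem_of_not_mem' hBbc nBde)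
  obtain ⟨n, hFn, hCn⟩ := exists_line_of_ne (L := L) hCF.symm
  have hψM : (ψ ⟨M, hMde⟩ : P) = C :=
    point_eq_of_mem_of_ne (ne_of_mem_of_not_mem' hFn nFcd)
      (hψ _ C hCκ hBC.symm hCF ⟨lbc, hBbc, hMbc, hCbc⟩ n hFn hCn) (ψ _).2 hCn hCcd
  have hObc : O ∈ lbc :=
    hO.mem_of_mem ⟨M, hMde⟩ hMbc (hψM ▸ hCbc) (hψM ▸ ne_of_mem_of_not_mem hMde nCde)
  have hYO : Y = O := point_eq_of_mem_of_ne
    (ne_of_mem_of_not_mem' hBbc (hκ.notMem hBκ hEκ hFκ hBE hBF hEF hEef hFef)) hYbc hYef hObc hOef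
  obtain ⟨k, hOk, hXk, hZk⟩ := hO.2.2 ⟨X, hXde⟩
  exact ⟨k, hXk, hYO ▸ hOk, hψX ▸ hZk⟩

end Pascal

section BaseChange

variable {P L} [ProjectivePlane P L] {κ : Set P}

/-- Moving the second base point from `V` to `A`: the projectivity `U* → RV → VT → A*`, whose
middle step is the perspectivity with center `UT·AR`, sends `UX` to `AX` by Pascal's theorem for
the hexagon `TUXARV`. -/
theorem IsSteinerPair.of_aux_points (h3 : LinesHaveAtLeast P L 3) (hT : AxiomT P L)
    (hκ : IsArc L κ) {U V A R T : P} (hG : IsSteinerPair L κ U V) (hUκ : U ∈ κ) (hVκ : V ∈ κ)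
    (hAκ : A ∈ κ) (hRκ : R ∈ κ) (hTκ : T ∈ κ) (hUV : U ≠ V) (hUA : U ≠ A) (hUR : U ≠ R)
    (hUT : U ≠ T) (hVA : V ≠ A) (hVR : V ≠ R) (hVT : V ≠ T) (hAR : A ≠ R) (hAT : A ≠ T)
    (hRT : R ≠ T) : IsSteinerPair L κ U A := by
  obtain ⟨e₁, hUe₁, hTe₁⟩ := exists_line_of_ne (L := L) hUT
  obtain ⟨e₂, hAe₂, hRe₂⟩ := exists_line_of_ne (L := L) hAR
  obtain ⟨m₁, hRm₁, hVm₁⟩ := exists_line_of_ne (L := L) hVR.symm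
  obtain ⟨m₂, hVm₂, hTm₂⟩ := exists_line_of_ne (L := L) hVT
  have nUm₁ : U ∉ m₁ := hκ.notMem hUκ hRκ hVκ hUR hUV hVR.symm hRm₁ hVm₁
  have nUm₂ : U ∉ m₂ := hκ.notMem hUκ hVκ hTκ hUV hUT hVT hVm₂ hTm₂
  have nAm₁ : A ∉ m₁ := hκ.notMem hAκ hRκ hVκ hAR hVA.symm hVR.symm hRm₁ hVm₁
  have nAm₂ : A ∉ m₂ := hκ.notMem hAκ hVκ hTκ hVA.symm hAT hVT hVm₂ hTm₂
  have nAe₁ : A ∉ e₁ := hκ.notMem hAκ hUκ hTκ hUA.symm hAT hUT hUe₁ hTe₁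
  have nRe₁ : R ∉ e₁ := hκ.notMem hRκ hUκ hTκ hUR.symm hRT hUT hUe₁ hTe₁
  have nTe₂ : T ∉ e₂ := hκ.notMem hTκ hAκ hRκ hAT.symm hRT.symm hAR hAe₂ hRe₂
  obtain ⟨O, hOe₁, hOe₂⟩ := exists_point_of_ne (P := P) (ne_of_mem_of_not_mem' hAe₂ nAe₁).symm
  have nOm₁ : O ∉ m₁ := fun hOm₁ => nRe₁ <|
    point_eq_of_mem_of_ne (ne_of_mem_of_not_mem' hAe₂ nAm₁) hOe₂ hOm₁ hRe₂ hRm₁ ▸ hOe₁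
  have nOm₂ : O ∉ m₂ := fun hOm₂ => nTe₂ <|
    point_eq_of_mem_of_ne (ne_of_mem_of_not_mem' hUe₁ nUm₂) hOe₁ hOm₂ hTe₁ hTm₂ ▸ hOe₂
  obtain ⟨e, he⟩ := exists_isElemMap nUm₁
  obtain ⟨p, hp⟩ := exists_isPerspCenter nOm₁ nOm₂
  obtain ⟨i, hi⟩ := exists_isElemInv nAm₂
  refine ⟨hUA, i ∘ p ∘ e, .comp (.comp (.elem he) (.persp hp.isRangePersp)) (.elemInv hi),
    fun X hX hXU hXA k hXk => ?_⟩
  suffices ∃ Q ∈ m₂, Col P L O (e k) Q ∧ Col P L A Q X by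
    obtain ⟨Q, hQ, hOQ, n, hAn, hQn, hXn⟩ := this
    have hpQ : (p (e k) : P) = Q := hp.apply_eq _ hQ hOQ
    show X ∈ (i (p (e k)) : L)
    rwa [hi.apply_eq _ hAn (hpQ ▸ hQn)]
  by_cases hXV : X = V
  · subst hXV
    refine ⟨X, hVm₂, ?_, col_pair hXA.symm⟩
    rw [he.apply_eq k hXk hVm₁]
    exact col_pair (ne_of_mem_of_not_mem hVm₁ nOm₁).symm
  by_cases hXR : X = R
  · subst hXR
    obtain ⟨Q, hQe₂, hQm₂⟩ := exists_point_of_ne (P := P) (ne_of_mem_of_not_mem' hAe₂ nAm₂)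
    rw [he.apply_eq k hXk hRm₁]
    exact ⟨Q, hQm₂, ⟨e₂, hOe₂, hRe₂, hQe₂⟩, ⟨e₂, hAe₂, hQe₂, hRe₂⟩⟩
  by_cases hXT : X = T
  · subst hXT
    have hke₁ : (k : L) = e₁ := line_eq_of_mem_of_ne hUT k.2 hXk hUe₁ hTe₁
    exact ⟨X, hTm₂, ⟨e₁, hOe₁, hke₁ ▸ he.2 k, hTe₁⟩, col_pair hXA.symm⟩
  obtain ⟨n, hXn, hAn⟩ := exists_line_of_ne (L := L) hXA
  obtain ⟨Q, hQn, hQm₂⟩ := exists_point_of_ne (P := P) (ne_of_mem_of_not_mem' hAn nAm₂)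
  refine ⟨Q, hQm₂, ?_, ⟨n, hAn, hQn, hXn⟩⟩
  exact hG.pascal h3 hT hκ hTκ hUκ hX hAκ hRκ hVκ hUT.symm hVT.symm (Ne.symm hXU) hUA hUR hUV hXA
    hXR hXV hAR hVA.symm hVR.symm hTe₁ hUe₁ k.2 hXk hXn hAn hAe₂ hRe₂ hRm₁ hVm₁ hVm₂ hTm₂
    hOe₁ hOe₂ (he.2 k) (e k).2 hQn hQm₂

theorem IsSteinerPair.of_ne (h3 : LinesHaveAtLeast P L 3) (hT : AxiomT P L) (hκ : IsArc L κ)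
    (h5 : 5 ≤ κ.encard) {U V A : P} (hG : IsSteinerPair L κ U V) (hU : U ∈ κ) (hV : V ∈ κ)
    (hA : A ∈ κ) (hUA : U ≠ A) : IsSteinerPair L κ U A := by
  by_cases hVA : V = A
  · exact hVA ▸ hG
  have h3t : ({U, V, A} : Set P).encard ≤ 3 := by
    grw [Set.encard_insert_le, Set.encard_insert_le, Set.encard_singleton]
    norm_num
  obtain ⟨R, ⟨hR, hRt⟩, T, ⟨hTκ, hTt⟩, hRT⟩ := exists_pair_mem_sdiff (Set.toFinite {U, V, A})
    ((add_le_add_left h3t 2).trans (le_of_eq_of_le (by norm_num) h5))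
  simp only [Set.mem_insert_iff, Set.mem_singleton_iff, not_or] at hRt hTt
  exact hG.of_aux_points h3 hT hκ hU hV hA hR hTκ hG.1 hUA (Ne.symm hRt.1) (Ne.symm hTt.1) hVA
    (Ne.symm hRt.2.1) (Ne.symm hTt.2.1) (Ne.symm hRt.2.2) (Ne.symm hTt.2.2) hRT

theorem IsSteinerPair.of_mem (h3 : LinesHaveAtLeast P L 3) (hT : AxiomT P L) (hκ : IsArc L κ)
    (h5 : 5 ≤ κ.encard) {U V B F : P} (hG : IsSteinerPair L κ U V) (hU : U ∈ κ) (hV : V ∈ κ)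
    (hB : B ∈ κ) (hF : F ∈ κ) (hBF : B ≠ F) : IsSteinerPair L κ B F := by
  by_cases hBU : B = U
  · subst hBU
    exact hG.of_ne h3 hT hκ h5 hU hV hF hBF
  exact ((hG.of_ne h3 hT hκ h5 hU hV hB (Ne.symm hBU)).symm.of_ne h3 hT hκ h5 hB hU hF hBF)

end BaseChange

/-- **Pascal's Theorem.** Let `ABCDEF` be a simple hexagon inscribed in a conic
`κ` (six distinct points of `κ`).  Then the pairs of opposite sides
`(AB, DE)`, `(BC, EF)`, `(CD, FA)` consist of distinct lines, and the three
points of intersection `AB·DE`, `BC·EF`, `CD·FA` are pairwise distinct and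
collinear. -/
theorem pascal
    [Configuration.ProjectivePlane P L]
    (h6 : LinesHaveAtLeast P L 6) (hT : AxiomT P L)
    (κ : Set P) (hκ : IsConic P L κ)
    (A B C D E F : P)
    (hAκ : A ∈ κ) (hBκ : B ∈ κ) (hCκ : C ∈ κ) (hDκ : D ∈ κ) (hEκ : E ∈ κ) (hFκ : F ∈ κ)
    (hAB : A ≠ B) (hAC : A ≠ C) (hAD : A ≠ D) (hAE : A ≠ E) (hAF : A ≠ F)
    (hBC : B ≠ C) (hBD : B ≠ D) (hBE : B ≠ E) (hBF : B ≠ F)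
    (hCD : C ≠ D) (hCE : C ≠ E) (hCF : C ≠ F)
    (hDE : D ≠ E) (hDF : D ≠ F) (hEF : E ≠ F) :
    ∀ lab lde lbc lef lcd lfa : L,
      A ∈ lab → B ∈ lab → D ∈ lde → E ∈ lde →
      B ∈ lbc → C ∈ lbc → E ∈ lef → F ∈ lef →
      C ∈ lcd → D ∈ lcd → F ∈ lfa → A ∈ lfa →
      lab ≠ lde ∧ lbc ≠ lef ∧ lcd ≠ lfa ∧
      ∀ X Y Z : P, X ∈ lab → X ∈ lde → Y ∈ lbc → Y ∈ lef → Z ∈ lcd → Z ∈ lfa →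
        X ≠ Y ∧ X ≠ Z ∧ Y ≠ Z ∧ Col P L X Y Z := by
  intro lab lde lbc lef lcd lfa hAab hBab hDde hEde hBbc hCbc hEef hFef hCcd hDcd hFfa hAfa
  obtain ⟨U, V, π, hUV, hπ, hnp, rfl⟩ := hκ
  have h3 : LinesHaveAtLeast P L 3 := h6.mono (by norm_num)
  have harc := isArc_conicSet hT hUV hπ hnp
  have hBF' : IsSteinerPair L (conicSet P L U V π) B F :=
    (isSteinerPair_conicSet hUV hπ).of_mem h3 hT harc
      (le_trans (by norm_num) (le_encard_conicSet h6 hUV hπ hnp))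
      (left_mem_conicSet hUV hπ) (right_mem_conicSet hUV) hBκ hFκ hBF
  refine ⟨ne_of_mem_of_not_mem' hAab (harc.notMem hAκ hDκ hEκ hAD hAE hDE hDde hEde),
    ne_of_mem_of_not_mem' hBbc (harc.notMem hBκ hEκ hFκ hBE hBF hEF hEef hFef),
    ne_of_mem_of_not_mem' hCcd (harc.notMem hCκ hFκ hAκ hCF hAC.symm hAF.symm hFfa hAfa),
    fun X Y Z hXab hXde hYbc hYef hZcd hZfa => ⟨?_, ?_, ?_, ?_⟩⟩
  · rintro rfl
    exact hBE ((harc.eq_of_mem_of_mem hAκ hBκ hCκ hAB hAC hBC hAab hBab hBbc hCbc hXab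
      hYbc).symm.trans (harc.eq_of_mem_of_mem hDκ hEκ hFκ hDE hDF hEF hDde hEde hEef hFef hXde
      hYef))
  · rintro rfl
    exact hAD ((harc.eq_of_mem_of_mem hFκ hAκ hBκ hAF.symm hBF.symm hAB hFfa hAfa hAab hBab hZfa
      hXab).symm.trans (harc.eq_of_mem_of_mem hCκ hDκ hEκ hCD hCE hDE hCcd hDcd hDde hEde hZcd
      hXde))
  · rintro rfl
    exact hCF ((harc.eq_of_mem_of_mem hBκ hCκ hDκ hBC hBD hCD hBbc hCbc hCcd hDcd hYbc
      hZcd).symm.trans (harc.eq_of_mem_of_mem hEκ hFκ hAκ hEF hAE.symm hAF.symm hEef hFef hFfa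
      hAfa hYef hZfa))
  · exact hBF'.pascal h3 hT harc hAκ hBκ hCκ hDκ hEκ hFκ hAB hAF hBC hBD hBE hBF hCD hCE hCF hDE
      hDF hEF hAab hBab hBbc hCbc hCcd hDcd hDde hEde hEef hFef hFfa hAfa hXab hXde hYbc hYef
      hZcd hZfa
end

section
/- Corollary to Pascal's Theorem: Let A, B, C, D, E be five distinct points of a conic κ. If l is a line through E that avoids each of the points A, B, C, D, and l passes through a sixth point F of κ with F distinct from each of A, B, C, D, E, then F = l·A(CD·XY), where X = AB·DE and Y = BC·l; that is, F is the intersection of l with the line joining A to the point CD·((AB·DE)(BC·l)). -/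
/-!
Steiner's theorem is the heart of the matter: for any two points `A`, `C` of the conic
`κ(π;U,V)` there is a projectivity `σ : A* → C*` with `σ(AQ) = CQ` for every other point `Q`
of the conic. The base points are moved one at a time, `U* → T*` through an auxiliary point
`R` of the conic; that this base change carries `UQ` to `TQ` is Pascal's theorem for the
degenerate hexagon `U U T Q V R` (the side `UU` being the tangent at `U`), which follows from
Axiom T applied to a projectivity of `U*` fixing the tangent, `UT` and `UQ`.

Given `σ`, the map `M ↦ σ(AM)·l` from `DE` to `l` agrees with the perspectivity of centre `W`
at `D`, `E` and `X`, so by Axiom T the two coincide; at `M = AF·DE` this says that `W` lies on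
`AF`, i.e. `A(CD·XY)` meets `l` in `F`.
-/

open Configuration

universe u
variable (P L : Type u) [Membership P L]

theorem Set.exists_mem_ne_of_four_le_encard {α : Type*} {s : Set α} (hs : 4 ≤ s.encard)
    (a b c : α) : ∃ x ∈ s, x ≠ a ∧ x ≠ b ∧ x ≠ c := by
  by_contra! h
  have hsub : s ⊆ {a, b, c} := fun x hx => by
    simpa [or_iff_not_imp_left] using h x hx
  have h3 : ({a, b, c} : Set α).encard ≤ 3 := by
    grw [Set.encard_insert_le, Set.encard_insert_le, Set.encard_singleton]
    rfl
  have := (hs.trans (Set.encard_le_encard hsub)).trans h3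
  norm_num at this

theorem Set.four_le_encard_of_ne {α : Type*} {s : Set α} {a b c d : α} (ha : a ∈ s) (hb : b ∈ s)
    (hc : c ∈ s) (hd : d ∈ s) (hab : a ≠ b) (hac : a ≠ c) (had : a ≠ d) (hbc : b ≠ c)
    (hbd : b ≠ d) (hcd : c ≠ d) : 4 ≤ s.encard := by
  have h4 : ({a, b, c, d} : Set α).encard = 4 := by
    rw [Set.encard_insert_of_notMem (by simp [*]), Set.encard_insert_of_notMem (by simp [*]),
      Set.encard_pair hcd]
    rfl
  exact h4 ▸ Set.encard_le_encard (by simp [Set.insert_subset_iff, *])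

theorem Set.Subsingleton.false_of_three_mem {α : Type*} {S : Set α} {O X Y Z : α}
    (hS : (S \ {O}).Subsingleton) (hX : X ∈ S) (hY : Y ∈ S) (hZ : Z ∈ S) (hXY : X ≠ Y)
    (hXZ : X ≠ Z) (hYZ : Y ≠ Z) : False := by
  rcases eq_or_ne X O with rfl | hXO
  · exact hYZ (hS ⟨hY, hXY.symm⟩ ⟨hZ, hXZ.symm⟩)
  rcases eq_or_ne Y O with rfl | hYO
  · exact hXZ (hS ⟨hX, hXO⟩ ⟨hZ, hYZ.symm⟩)
  · exact hXY (hS ⟨hX, hXO⟩ ⟨hY, hYO⟩)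

namespace Configuration.ProjectivePlane

variable {P L}

variable (L) in
def IsArc (κ : Set P) : Prop :=
  ∀ ⦃X Y Z : P⦄, X ∈ κ → Y ∈ κ → Z ∈ κ → X ≠ Y → X ≠ Z → Y ≠ Z → ¬ Col P L X Y Z

theorem IsArc.not_mem {κ : Set P} (hκ : IsArc L κ) {X Y Z : P} (hX : X ∈ κ) (hY : Y ∈ κ)
    (hZ : Z ∈ κ) (hXY : X ≠ Y) (hXZ : X ≠ Z) (hYZ : Y ≠ Z) {m : L} (hXm : X ∈ m)
    (hYm : Y ∈ m) : Z ∉ m :=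
  fun hZm => hκ hX hY hZ hXY hXZ hYZ ⟨m, hXm, hYm, hZm⟩

/-- `σ` carries `AQ` to `CQ`. -/
def Carries {A C : P} (σ : {k : L // A ∈ k} → {k : L // C ∈ k}) (Q : P) : Prop :=
  ∀ k : {k : L // A ∈ k}, Q ∈ (k : L) → Q ∈ (σ k : L)

structure IsNonperspective {U V : P} (π : {k : L // U ∈ k} → {k : L // V ∈ k}) : Prop where
  ne : U ≠ V
  isProj : IsProj P L (.pencil U) (.pencil V) π
  apply_ne : ∀ k, (π k : L) ≠ k

variable [ProjectivePlane P L]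

theorem exists_line_mem (A B : P) : ∃ l : L, A ∈ l ∧ B ∈ l := by
  obtain ⟨C, hAC⟩ : ∃ C : P, A ≠ C := by
    obtain ⟨p₁, p₂, -, -, l₂, -, h₁, -, -, h₂, -⟩ := exists_config (P := P) (L := L)
    by_cases h : A = p₁
    · exact ⟨p₂, h ▸ (ne_of_mem_of_not_mem h₂ h₁).symm⟩
    · exact ⟨p₁, h⟩
  by_cases hAB : A = B
  · exact ⟨HasLines.mkLine hAC, (HasLines.mkLine_ax hAC).1, hAB ▸ (HasLines.mkLine_ax hAC).1⟩
  · exact ⟨HasLines.mkLine hAB, HasLines.mkLine_ax hAB⟩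

theorem exists_point_mem (l m : L) : ∃ X : P, X ∈ l ∧ X ∈ m :=
  exists_line_mem (P := Dual L) (L := Dual P) l m

/- `join L A B` and `meet P l m` are a line through `A` and `B` and a point on `l` and `m`;
they are unique only when `A ≠ B`, resp. `l ≠ m`. -/

variable (L) in
noncomputable def join (A B : P) : L := (exists_line_mem A B).choose

variable (P) in
noncomputable def meet (l m : L) : P := (exists_point_mem l m).choose

theorem left_mem_join (A B : P) : A ∈ join L A B := (exists_line_mem A B).choose_spec.1

theorem right_mem_join (A B : P) : B ∈ join L A B := (exists_line_mem A B).choose_spec.2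

theorem meet_mem_left (l m : L) : meet P l m ∈ l := (exists_point_mem l m).choose_spec.1

theorem meet_mem_right (l m : L) : meet P l m ∈ m := (exists_point_mem l m).choose_spec.2

theorem line_eq_of_mem {A B : P} {l m : L} (hAB : A ≠ B) (hAl : A ∈ l) (hBl : B ∈ l)
    (hAm : A ∈ m) (hBm : B ∈ m) : l = m :=
  (Nondegenerate.eq_or_eq hAl hBl hAm hBm).resolve_left hAB

theorem point_eq_of_mem {A B : P} {l m : L} (hlm : l ≠ m) (hAl : A ∈ l) (hAm : A ∈ m)
    (hBl : B ∈ l) (hBm : B ∈ m) : A = B :=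
  (Nondegenerate.eq_or_eq hAl hBl hAm hBm).resolve_right hlm

theorem join_eq {A B : P} {l : L} (hAB : A ≠ B) (hA : A ∈ l) (hB : B ∈ l) : join L A B = l :=
  line_eq_of_mem hAB (left_mem_join A B) (right_mem_join A B) hA hB

theorem meet_eq {l m : L} {X : P} (hlm : l ≠ m) (hl : X ∈ l) (hm : X ∈ m) : meet P l m = X :=
  point_eq_of_mem hlm (meet_mem_left l m) (meet_mem_right l m) hl hm

theorem join_comm {A B : P} (hAB : A ≠ B) : join L A B = join L B A :=
  join_eq hAB (right_mem_join B A) (left_mem_join B A)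

noncomputable def elemMap (U : P) (m : L) (k : {k : L // U ∈ k}) : {X : P // X ∈ m} :=
  ⟨meet P (k : L) m, meet_mem_right _ _⟩

noncomputable def elemInv (U : P) (m : L) (X : {X : P // X ∈ m}) : {k : L // U ∈ k} :=
  ⟨join L U X, left_mem_join _ _⟩

theorem isProj_elemMap {U : P} {m : L} (hU : U ∉ m) :
    IsProj P L (.pencil U) (.range m) (elemMap U m) :=
  .elem ⟨hU, fun _ => meet_mem_left _ _⟩

theorem isProj_elemInv {U : P} {m : L} (hU : U ∉ m) :
    IsProj P L (.range m) (.pencil U) (elemInv U m) :=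
  .elemInv ⟨hU, fun _ => right_mem_join _ _⟩

section ElementaryPair

variable {U : P} {m : L} {f : {k : L // U ∈ k} → {X : P // X ∈ m}}
  {g : {X : P // X ∈ m} → {k : L // U ∈ k}}

theorem _root_.IsElemMap.leftInverse (hf : IsElemMap P L U m f) (hg : IsElemInv P L U m g) :
    Function.LeftInverse g f := fun k =>
  Subtype.ext (line_eq_of_mem (ne_of_mem_of_not_mem (f k).2 hf.1).symm (g (f k)).2 (hg.2 _)
    k.2 (hf.2 k))

theorem _root_.IsElemMap.rightInverse (hf : IsElemMap P L U m f) (hg : IsElemInv P L U m g) :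
    Function.RightInverse g f := fun X =>
  Subtype.ext (point_eq_of_mem (ne_of_mem_of_not_mem' (g X).2 hf.1) (hf.2 _) (f _).2
    (hg.2 X) X.2)

end ElementaryPair

theorem _root_.IsProj.exists_inverse_s12 {a b : Obj P L} {f : a.Carrier → b.Carrier}
    (hf : IsProj P L a b f) :
    ∃ g : b.Carrier → a.Carrier, IsProj P L b a g ∧
      Function.LeftInverse g f ∧ Function.RightInverse g f := by
  induction hf with
  | @persp l m f hf =>
    obtain ⟨O, hOl, hOm, hf⟩ := hf
    refine ⟨elemMap O l ∘ elemInv O m, .comp (isProj_elemInv hOm) (isProj_elemMap hOl),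
      fun X => ?_, fun Y => ?_⟩
    · obtain ⟨k, hOk, hXk, hfXk⟩ := hf X
      have hk : join L O (f X) = k := join_eq (ne_of_mem_of_not_mem (f X).2 hOm).symm hOk hfXk
      refine Subtype.ext ?_
      change meet P (join L O (f X)) l = X
      rw [hk]
      exact meet_eq (ne_of_mem_of_not_mem' hOk hOl) hXk X.2
    · set X := (elemMap O l ∘ elemInv O m) Y
      have hXY : (X : P) ∈ join L O Y := meet_mem_left _ _
      obtain ⟨k, hOk, hXk, hfXk⟩ := hf X
      have hk : k = join L O Y :=
        line_eq_of_mem (ne_of_mem_of_not_mem X.2 hOl).symm hOk hXk (left_mem_join _ _) hXY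
      exact Subtype.ext (point_eq_of_mem (ne_of_mem_of_not_mem' (left_mem_join O Y) hOm)
        (hk ▸ hfXk) (f X).2 (right_mem_join _ _) Y.2)
  | @elem U m f hf =>
    exact ⟨elemInv U m, isProj_elemInv hf.1,
      IsElemMap.leftInverse hf ⟨hf.1, fun _ => right_mem_join _ _⟩,
      IsElemMap.rightInverse hf ⟨hf.1, fun _ => right_mem_join _ _⟩⟩
  | @elemInv U m f hf =>
    exact ⟨elemMap U m, isProj_elemMap hf.1,
      IsElemMap.rightInverse ⟨hf.1, fun _ => meet_mem_left _ _⟩ hf,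
      IsElemMap.leftInverse ⟨hf.1, fun _ => meet_mem_left _ _⟩ hf⟩
  | comp _ _ ihf ihg =>
    obtain ⟨f', hf', hf'f, hff'⟩ := ihf
    obtain ⟨g', hg', hg'g, hgg'⟩ := ihg
    exact ⟨f' ∘ g', .comp hg' hf', hg'g.comp hf'f, hgg'.comp hff'⟩

theorem _root_.AxiomT.isElemInv_of_three (hT : AxiomT P L) {W : P} {m : L} (hW : W ∉ m)
    {h : {X : P // X ∈ m} → {k : L // W ∈ k}} (hh : IsProj P L (.range m) (.pencil W) h)
    {X₁ X₂ X₃ : {X : P // X ∈ m}} (h₁₂ : X₁ ≠ X₂) (h₁₃ : X₁ ≠ X₃) (h₂₃ : X₂ ≠ X₃)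
    (h₁ : (X₁ : P) ∈ (h X₁ : L)) (h₂ : (X₂ : P) ∈ (h X₂ : L)) (h₃ : (X₃ : P) ∈ (h X₃ : L)) :
    IsElemInv P L W m h := by
  have hfix : ∀ X : {X : P // X ∈ m}, (X : P) ∈ (h X : L) → elemMap W m (h X) = X :=
    fun X hX => Subtype.ext (meet_eq (ne_of_mem_of_not_mem' (h X).2 hW) hX X.2)
  have hid := hT (.range m) (elemMap W m ∘ h) (.comp hh (isProj_elemMap hW))
    ⟨X₁, X₂, X₃, h₁₂, h₁₃, h₂₃, hfix _ h₁, hfix _ h₂, hfix _ h₃⟩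
  exact ⟨hW, fun X => congrArg Subtype.val (hid X) ▸ meet_mem_left _ _⟩

theorem _root_.AxiomT.isElemMap_of_three (hT : AxiomT P L) {U : P} {m : L} (hU : U ∉ m)
    {g : {k : L // U ∈ k} → {X : P // X ∈ m}} (hg : IsProj P L (.pencil U) (.range m) g)
    {k₁ k₂ k₃ : {k : L // U ∈ k}} (h₁₂ : k₁ ≠ k₂) (h₁₃ : k₁ ≠ k₃) (h₂₃ : k₂ ≠ k₃)
    (h₁ : (g k₁ : P) ∈ (k₁ : L)) (h₂ : (g k₂ : P) ∈ (k₂ : L)) (h₃ : (g k₃ : P) ∈ (k₃ : L)) :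
    IsElemMap P L U m g := by
  have hfix : ∀ k : {k : L // U ∈ k}, (g k : P) ∈ (k : L) → elemInv U m (g k) = k :=
    fun k hk => Subtype.ext (join_eq (ne_of_mem_of_not_mem (g k).2 hU).symm k.2 hk)
  have hid := hT (.pencil U) (elemInv U m ∘ g) (.comp hg (isProj_elemInv hU))
    ⟨k₁, k₂, k₃, h₁₂, h₁₃, h₂₃, hfix _ h₁, hfix _ h₂, hfix _ h₃⟩
  exact ⟨hU, fun k => congrArg Subtype.val (hid k) ▸ right_mem_join _ _⟩

section Conic

variable {U V : P} {π : {k : L // U ∈ k} → {k : L // V ∈ k}}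

theorem mem_apply_of_mem_conicSet {Q : P} (hQ : Q ∈ conicSet P L U V π) (hQU : Q ≠ U)
    {k : {k : L // U ∈ k}} (hk : Q ∈ (k : L)) : Q ∈ (π k : L) := by
  obtain ⟨k₀, hQk₀, hQπk₀⟩ := hQ
  obtain rfl : k₀ = k := Subtype.ext (line_eq_of_mem hQU hQk₀ k₀.2 hk k.2)
  exact hQπk₀

theorem IsNonperspective.injective (hπ : IsNonperspective π) : Function.Injective π := by
  obtain ⟨ψ, -, hψπ, -⟩ := hπ.isProj.exists_inverse_s12
  exact hψπ.injective

theorem right_mem_conicSet : V ∈ conicSet P L U V π :=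
  ⟨⟨join L U V, left_mem_join _ _⟩, right_mem_join _ _, (π _).2⟩

theorem IsNonperspective.mem_of_mem_apply (hπ : IsNonperspective π) {Q : P}
    (hQ : Q ∈ conicSet P L U V π) (hQV : Q ≠ V) {k : {k : L // U ∈ k}} (hk : Q ∈ (π k : L)) :
    Q ∈ (k : L) := by
  obtain ⟨k₀, hQk₀, hQπk₀⟩ := hQ
  obtain rfl : k₀ = k :=
    hπ.injective (Subtype.ext (line_eq_of_mem hQV hQπk₀ (π k₀).2 hk (π k).2))
  exact hQk₀

theorem IsNonperspective.exists_tangent (hπ : IsNonperspective π) :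
    ∃ u : {k : L // U ∈ k}, U ∈ (π u : L) := by
  obtain ⟨ψ, -, -, hπψ⟩ := hπ.isProj.exists_inverse_s12
  exact ⟨ψ ⟨join L V U, left_mem_join _ _⟩, (hπψ _).symm ▸ right_mem_join _ _⟩

theorem IsNonperspective.eq_of_mem_tangent (hπ : IsNonperspective π) {u : {k : L // U ∈ k}}
    (hu : U ∈ (π u : L)) {Q : P} (hQ : Q ∈ conicSet P L U V π) (hQu : Q ∈ (u : L)) : Q = U := by
  by_contra hQU
  exact hπ.apply_ne u (line_eq_of_mem hQU (mem_apply_of_mem_conicSet hQ hQU hQu) hu hQu u.2)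

theorem IsNonperspective.subsingleton_of_left_mem (hπ : IsNonperspective π) {m : L}
    (hUm : U ∈ m) :
    ({Q | Q ∈ conicSet P L U V π ∧ Q ∈ m} \ {U}).Subsingleton := by
  rintro Q₁ ⟨⟨hQ₁, hQ₁m⟩, hQ₁U⟩ Q₂ ⟨⟨hQ₂, hQ₂m⟩, hQ₂U⟩
  exact point_eq_of_mem (hπ.apply_ne ⟨m, hUm⟩).symm hQ₁m
    (mem_apply_of_mem_conicSet hQ₁ hQ₁U (k := ⟨m, hUm⟩) hQ₁m) hQ₂m
    (mem_apply_of_mem_conicSet hQ₂ hQ₂U (k := ⟨m, hUm⟩) hQ₂m)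

theorem IsNonperspective.subsingleton_of_right_mem (hπ : IsNonperspective π) {m : L}
    (hVm : V ∈ m) :
    ({Q | Q ∈ conicSet P L U V π ∧ Q ∈ m} \ {V}).Subsingleton := by
  rintro Q₁ ⟨⟨⟨k₁, hQ₁k, hQ₁πk⟩, hQ₁m⟩, hQ₁V⟩ Q₂ ⟨⟨⟨k₂, hQ₂k, hQ₂πk⟩, hQ₂m⟩, hQ₂V⟩
  have h₁ : (π k₁ : L) = m := line_eq_of_mem hQ₁V hQ₁πk (π k₁).2 hQ₁m hVm
  have h₂ : (π k₂ : L) = m := line_eq_of_mem hQ₂V hQ₂πk (π k₂).2 hQ₂m hVm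
  obtain rfl : k₁ = k₂ := hπ.injective (Subtype.ext (h₁.trans h₂.symm))
  exact point_eq_of_mem (h₁ ▸ hπ.apply_ne k₁).symm hQ₁k hQ₁m hQ₂k hQ₂m

theorem IsNonperspective.isArc (hT : AxiomT P L) (hπ : IsNonperspective π) :
    IsArc L (conicSet P L U V π) := by
  rintro X Y Z hX hY hZ hXY hXZ hYZ ⟨m, hXm, hYm, hZm⟩
  by_cases hUm : U ∈ m
  · exact (hπ.subsingleton_of_left_mem hUm).false_of_three_mem ⟨hX, hXm⟩ ⟨hY, hYm⟩ ⟨hZ, hZm⟩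
      hXY hXZ hYZ
  by_cases hVm : V ∈ m
  · exact (hπ.subsingleton_of_right_mem hVm).false_of_three_mem ⟨hX, hXm⟩ ⟨hY, hYm⟩ ⟨hZ, hZm⟩
      hXY hXZ hYZ
  have hconic : ∀ {Q : P} (hQ : Q ∈ conicSet P L U V π) (hQm : Q ∈ m),
      Q ∈ ((π ∘ elemInv U m) ⟨Q, hQm⟩ : L) := fun hQ hQm =>
    mem_apply_of_mem_conicSet hQ (ne_of_mem_of_not_mem hQm hUm) (right_mem_join _ _)
  have hm : IsElemInv P L V m (π ∘ elemInv U m) :=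
    hT.isElemInv_of_three hVm (.comp (isProj_elemInv hUm) hπ.isProj)
      (fun h => hXY (congrArg Subtype.val h)) (fun h => hXZ (congrArg Subtype.val h))
      (fun h => hYZ (congrArg Subtype.val h)) (hconic hX hXm) (hconic hY hYm) (hconic hZ hZm)
  -- so `UV·m` lies on `π(UV)`, forcing `π(UV) = UV`
  set X₀ : {X : P // X ∈ m} := ⟨meet P (join L U V) m, meet_mem_right _ _⟩
  have hX₀ : elemInv U m X₀ = ⟨join L U V, left_mem_join _ _⟩ :=
    Subtype.ext (join_eq (ne_of_mem_of_not_mem X₀.2 hUm).symm (left_mem_join _ _)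
      (meet_mem_left _ _))
  have hX₀π : (X₀ : P) ∈ (π ⟨join L U V, left_mem_join _ _⟩ : L) := hX₀ ▸ hm.2 X₀
  exact hπ.apply_ne _ (line_eq_of_mem (ne_of_mem_of_not_mem X₀.2 hVm) hX₀π (π _).2
    (meet_mem_left _ _) (right_mem_join _ _))

theorem IsNonperspective.not_mem_apply (hπ : IsNonperspective π) {Q : P}
    (hQ : Q ∈ conicSet P L U V π) (hQU : Q ≠ U) {kQ : {k : L // U ∈ k}} (hQk : Q ∈ (kQ : L)) :
    U ∉ (π kQ : L) :=
  fun h => hQU (hπ.eq_of_mem_tangent h hQ hQk)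

theorem IsNonperspective.meet_apply_not_mem (hπ : IsNonperspective π) {Q : P}
    (hQ : Q ∈ conicSet P L U V π) (hQU : Q ≠ U) {kQ : {k : L // U ∈ k}} (hQk : Q ∈ (kQ : L))
    {n m : L} (hUn : U ∈ n) (hUm : U ∈ m) (hnm : n ≠ m) : meet P (π kQ : L) n ∉ m := fun h =>
  hπ.not_mem_apply hQ hQU hQk
    (point_eq_of_mem hnm (meet_mem_right _ _) h hUn hUm ▸ meet_mem_left _ _)

theorem IsNonperspective.meet_tangent_not_mem_join (hT : AxiomT P L) (hπ : IsNonperspective π)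
    {u : {k : L // U ∈ k}} (hu : U ∈ (π u : L)) {T Q : P} (hT' : T ∈ conicSet P L U V π)
    (hQ : Q ∈ conicSet P L U V π) (hTU : T ≠ U) (hTV : T ≠ V) (hQU : Q ≠ U) (hQT : Q ≠ T)
    {kQ : {k : L // U ∈ k}} (hQk : Q ∈ (kQ : L)) : meet P (π kQ : L) u ∉ join L T Q := by
  intro h
  have hQu : Q ∉ (u : L) := fun h => hQU (hπ.eq_of_mem_tangent hu hQ h)
  have hπkQ : (π kQ : L) = join L T Q :=
    line_eq_of_mem (ne_of_mem_of_not_mem (meet_mem_right _ _) hQu) (meet_mem_left _ _)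
      (mem_apply_of_mem_conicSet hQ hQU hQk) h (right_mem_join _ _)
  have hTk : T ∈ (kQ : L) := hπ.mem_of_mem_apply hT' hTV (hπkQ ▸ left_mem_join _ _)
  exact hπ.isArc hT ⟨u, u.2, hu⟩ hQ hT' hQU.symm hTU.symm hQT ⟨kQ, kQ.2, hQk, hTk⟩

/-- Pascal's theorem for the degenerate hexagon `U U T Q V R`, the side `UU` being the tangent
`u`: the cut of `U*` by `TQ` is the projectivity `U* → V* → UT → TQ` through the centre
`E₁ = π(UQ)·u`, because both agree on `u`, `UT` and `UQ`. -/
theorem IsNonperspective.isElemMap_pascal (hT : AxiomT P L) (hπ : IsNonperspective π)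
    {u : {k : L // U ∈ k}} (hu : U ∈ (π u : L)) {T Q : P} (hT' : T ∈ conicSet P L U V π)
    (hQ : Q ∈ conicSet P L U V π) (hTU : T ≠ U) (hTV : T ≠ V) (hQU : Q ≠ U) (hQT : Q ≠ T)
    {kQ : {k : L // U ∈ k}} (hQk : Q ∈ (kQ : L)) :
    IsElemMap P L U (join L T Q) (elemMap (meet P (π kQ : L) u) (join L T Q) ∘
      elemInv (meet P (π kQ : L) u) (join L U T) ∘ elemMap V (join L U T) ∘ π) := by
  have hκ := hπ.isArc hT
  have hUκ : U ∈ conicSet P L U V π := ⟨u, u.2, hu⟩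
  have hTu : T ∉ (u : L) := fun h => hTU (hπ.eq_of_mem_tangent hu hT' h)
  have hQu : Q ∉ (u : L) := fun h => hQU (hπ.eq_of_mem_tangent hu hQ h)
  have hUTQ : U ∉ join L T Q :=
    hκ.not_mem hT' hQ hUκ hQT.symm hTU hQU (left_mem_join _ _) (right_mem_join _ _)
  have hVUT : V ∉ join L U T :=
    hκ.not_mem hUκ hT' right_mem_conicSet hTU.symm hπ.ne hTV (left_mem_join _ _)
      (right_mem_join _ _)
  have hQUT : Q ∉ join L U T :=
    hκ.not_mem hUκ hT' hQ hTU.symm hQU.symm hQT.symm (left_mem_join _ _) (right_mem_join _ _)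
  have hE₁UT := hπ.meet_apply_not_mem hQ hQU hQk u.2 (left_mem_join U T)
    (ne_of_mem_of_not_mem' (right_mem_join U T) hTu).symm
  have hE₁TQ := hπ.meet_tangent_not_mem_join hT hu hT' hQ hTU hTV hQU hQT hQk
  set E₁ := meet P (π kQ : L) u
  set kT : {k : L // U ∈ k} := ⟨join L U T, left_mem_join _ _⟩
  refine hT.isElemMap_of_three hUTQ
    (((hπ.isProj.comp (isProj_elemMap hVUT)).comp (isProj_elemInv hE₁UT)).comp
      (isProj_elemMap hE₁TQ)) (k₁ := u) (k₂ := kT) (k₃ := kQ)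
    (fun h => hTu (by rw [h]; exact right_mem_join U T)) (fun h => hQu (by rw [h]; exact hQk))
    (fun h => hQUT (by rw [← h] at hQk; exact hQk)) ?_ ?_ ?_
  · change meet P (join L E₁ (meet P (π u : L) (join L U T))) (join L T Q) ∈ (u : L)
    rw [meet_eq (ne_of_mem_of_not_mem' (π u).2 hVUT) hu (left_mem_join _ _),
      join_eq (ne_of_mem_of_not_mem (left_mem_join U T) hE₁UT).symm (meet_mem_right _ _) u.2]
    exact meet_mem_left _ _
  · change meet P (join L E₁ (meet P (π kT : L) (join L U T))) (join L T Q) ∈ join L U T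
    rw [meet_eq (hπ.apply_ne kT) (mem_apply_of_mem_conicSet hT' hTU (right_mem_join _ _))
        (right_mem_join _ _),
      meet_eq (ne_of_mem_of_not_mem' (left_mem_join _ _) hE₁TQ) (right_mem_join _ _)
        (left_mem_join _ _)]
    exact right_mem_join _ _
  · change meet P (join L E₁ (meet P (π kQ : L) (join L U T))) (join L T Q) ∈ (kQ : L)
    rw [join_eq (ne_of_mem_of_not_mem (meet_mem_right _ _) hE₁UT).symm (meet_mem_left _ _)
        (meet_mem_left _ _),
      meet_eq (ne_of_mem_of_not_mem' (meet_mem_left _ _) hE₁TQ)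
        (mem_apply_of_mem_conicSet hQ hQU hQk) (right_mem_join _ _)]
    exact hQk

theorem IsNonperspective.meet_mem_join_of_tangent (hT : AxiomT P L) (hπ : IsNonperspective π)
    {u : {k : L // U ∈ k}} (hu : U ∈ (π u : L)) {T Q : P} (hT' : T ∈ conicSet P L U V π)
    (hQ : Q ∈ conicSet P L U V π) (hTU : T ≠ U) (hTV : T ≠ V) (hQU : Q ≠ U) (hQT : Q ≠ T)
    {kQ : {k : L // U ∈ k}} (hQk : Q ∈ (kQ : L)) (k : {k : L // U ∈ k}) :
    meet P (k : L) (join L T Q) ∈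
      join L (meet P (π kQ : L) u) (meet P (π k : L) (join L U T)) := by
  have hg := hπ.isElemMap_pascal hT hu hT' hQ hTU hTV hQU hQT hQk
  rw [meet_eq (ne_of_mem_of_not_mem' k.2 hg.1) (hg.2 k) (meet_mem_right _ _)]
  exact meet_mem_left _ _

/-- The base change `U* → T*`: `k ↦ T((E₂·(π(k)·u))·UR)` with `E₂ = VR·UT`, where `R` is a fourth
point of the conic; it carries `UQ` to `TQ` by the degenerate Pascal theorem for `U U T Q V R`. -/
theorem IsNonperspective.exists_baseChange (hT : AxiomT P L) (hπ : IsNonperspective π)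
    {u : {k : L // U ∈ k}} (hu : U ∈ (π u : L)) {T R : P} (hT' : T ∈ conicSet P L U V π)
    (hR : R ∈ conicSet P L U V π) (hTU : T ≠ U) (hTV : T ≠ V) (hRU : R ≠ U) (hRT : R ≠ T) :
    ∃ σ : {k : L // U ∈ k} → {k : L // T ∈ k}, IsProj P L (.pencil U) (.pencil T) σ ∧
      (∀ Q ∈ conicSet P L U V π, Q ≠ U → Q ≠ T → Carries σ Q) ∧ U ∈ (σ u : L) := by
  have hTUR : T ∉ join L U R := (hπ.isArc hT).not_mem ⟨u, u.2, hu⟩ hR hT' hRU.symm hTU.symm hRT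
    (left_mem_join _ _) (right_mem_join _ _)
  have hVu : V ∉ (u : L) := fun h => hπ.ne (hπ.eq_of_mem_tangent hu right_mem_conicSet h).symm
  have huUR : (u : L) ≠ join L U R :=
    (ne_of_mem_of_not_mem' (right_mem_join U R) fun h => hRU (hπ.eq_of_mem_tangent hu hR h)).symm
  have hUTu : join L U T ≠ u :=
    ne_of_mem_of_not_mem' (right_mem_join U T) fun h => hTU (hπ.eq_of_mem_tangent hu hT' h)
  have hUTUR : join L U T ≠ join L U R := ne_of_mem_of_not_mem' (right_mem_join U T) hTUR
  set kR : {k : L // U ∈ k} := ⟨join L U R, left_mem_join _ _⟩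
  have hE₂u := hπ.meet_apply_not_mem hR hRU (kQ := kR) (right_mem_join U R) (left_mem_join U T)
    u.2 hUTu
  have hE₂UR := hπ.meet_apply_not_mem hR hRU (kQ := kR) (right_mem_join U R) (left_mem_join U T)
    (left_mem_join U R) hUTUR
  set E₂ := meet P (π kR : L) (join L U T)
  refine ⟨elemInv T (join L U R) ∘ elemMap E₂ (join L U R) ∘ elemInv E₂ (u : L) ∘
      elemMap V (u : L) ∘ π,
    (((hπ.isProj.comp (isProj_elemMap hVu)).comp (isProj_elemInv hE₂u)).comp
      (isProj_elemMap hE₂UR)).comp (isProj_elemInv hTUR), fun Q hQ hQU hQT k hQk => ?_, ?_⟩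
  · change Q ∈ join L T (meet P (join L E₂ (meet P (π k : L) u)) (join L U R))
    have hPascal := hπ.meet_mem_join_of_tangent hT hu hT' hQ hTU hTV hQU hQT hQk kR
    have hE₁UR := hπ.meet_apply_not_mem hQ hQU hQk u.2 (left_mem_join U R) huUR
    rw [join_comm (ne_of_mem_of_not_mem (meet_mem_right _ _) hE₂u)] at hPascal
    rw [meet_eq (ne_of_mem_of_not_mem' (right_mem_join _ _) hE₁UR) hPascal (meet_mem_left _ _),
      join_eq (ne_of_mem_of_not_mem (meet_mem_left _ _) hTUR).symm (left_mem_join T Q)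
        (meet_mem_right _ _)]
    exact right_mem_join _ _
  · change U ∈ join L T (meet P (join L E₂ (meet P (π u : L) u)) (join L U R))
    rw [meet_eq (hπ.apply_ne u) hu u.2,
      join_eq (ne_of_mem_of_not_mem u.2 hE₂u).symm (meet_mem_right _ _) (left_mem_join U T),
      meet_eq hUTUR (left_mem_join _ _) (left_mem_join _ _)]
    exact right_mem_join _ _

theorem IsNonperspective.exists_carries_from_left (hT : AxiomT P L) (hπ : IsNonperspective π)
    {u : {k : L // U ∈ k}} (hu : U ∈ (π u : L)) (hcard : 4 ≤ (conicSet P L U V π).encard)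
    {T : P} (hT' : T ∈ conicSet P L U V π) :
    ∃ σ : {k : L // U ∈ k} → {k : L // T ∈ k}, IsProj P L (.pencil U) (.pencil T) σ ∧
      (∀ Q ∈ conicSet P L U V π, Q ≠ U → Q ≠ T → Carries σ Q) ∧ U ∈ (σ u : L) := by
  rcases eq_or_ne T U with rfl | hTU
  · obtain ⟨ψ, hψ, hψπ, -⟩ := hπ.isProj.exists_inverse_s12
    refine ⟨ψ ∘ π, hπ.isProj.comp hψ, fun Q _ _ _ k hk => ?_, ?_⟩
    · rwa [Function.comp_apply, hψπ k]
    · rw [Function.comp_apply, hψπ u]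
      exact u.2
  rcases eq_or_ne T V with rfl | hTV
  · exact ⟨π, hπ.isProj, fun Q hQ hQU _ _ hk => mem_apply_of_mem_conicSet hQ hQU hk, hu⟩
  obtain ⟨R, hR, hRU, -, hRT⟩ := Set.exists_mem_ne_of_four_le_encard hcard U V T
  exact hπ.exists_baseChange hT hu hT' hR hTU hTV hRU hRT

theorem IsNonperspective.exists_carries (hT : AxiomT P L) (hπ : IsNonperspective π)
    (hcard : 4 ≤ (conicSet P L U V π).encard) {A C : P} (hA : A ∈ conicSet P L U V π)
    (hC : C ∈ conicSet P L U V π) :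
    ∃ σ : {k : L // A ∈ k} → {k : L // C ∈ k}, IsProj P L (.pencil A) (.pencil C) σ ∧
      ∀ Q ∈ conicSet P L U V π, Q ≠ A → Q ≠ C → Carries σ Q := by
  obtain ⟨u, hu⟩ := hπ.exists_tangent
  obtain ⟨σA, hσA, hσAκ, hσAu⟩ := hπ.exists_carries_from_left hT hu hcard hA
  obtain ⟨σC, hσC, hσCκ, hσCu⟩ := hπ.exists_carries_from_left hT hu hcard hC
  obtain ⟨τA, hτA, hτσ, -⟩ := hσA.exists_inverse_s12
  refine ⟨σC ∘ τA, hτA.comp hσC, fun Q hQ hQA hQC k hQk => ?_⟩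
  obtain ⟨j, hQσA, hQσC⟩ : ∃ j, Q ∈ (σA j : L) ∧ Q ∈ (σC j : L) := by
    by_cases hQU : Q = U
    · rw [hQU]
      exact ⟨u, hσAu, hσCu⟩
    · exact ⟨⟨join L U Q, left_mem_join _ _⟩, hσAκ Q hQ hQU hQA _ (right_mem_join _ _),
        hσCκ Q hQ hQU hQC _ (right_mem_join _ _)⟩
  have hσAj : σA j = k := Subtype.ext (line_eq_of_mem hQA (hQσA) (σA j).2 hQk k.2)
  change Q ∈ (σC (τA k) : L)
  rwa [← hσAj, hτσ]

end Conic

theorem _root_.IsConic.isArc (hT : AxiomT P L) {κ : Set P} (hκ : IsConic P L κ) :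
    IsArc L κ := by
  obtain ⟨U, V, π, hUV, hπ, hnp, rfl⟩ := hκ
  exact IsNonperspective.isArc hT ⟨hUV, hπ, hnp⟩

theorem _root_.IsConic.exists_carries (hT : AxiomT P L) {κ : Set P} (hκ : IsConic P L κ)
    (hcard : 4 ≤ κ.encard) {A C : P} (hA : A ∈ κ) (hC : C ∈ κ) :
    ∃ σ : {k : L // A ∈ k} → {k : L // C ∈ k}, IsProj P L (.pencil A) (.pencil C) σ ∧
      ∀ Q ∈ κ, Q ≠ A → Q ≠ C → Carries σ Q := by
  obtain ⟨U, V, π, hUV, hπ, hnp, rfl⟩ := hκ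
  exact IsNonperspective.exists_carries hT ⟨hUV, hπ, hnp⟩ hcard hA hC

section Pascal

variable {κ : Set P} {A B C D E F X Y W : P} {l lab lde lbc lxy lcd : L}

theorem IsArc.pascal_center_not_mem (hκ : IsArc L κ) (hB : B ∈ κ) (hC : C ∈ κ) (hD : D ∈ κ)
    (hE : E ∈ κ) (hF : F ∈ κ) (hBC : B ≠ C) (hBD : B ≠ D) (hBE : B ≠ E) (hCD : C ≠ D)
    (hCE : C ≠ E) (hDE : D ≠ E) (hFC : F ≠ C) (hFD : F ≠ D) (hFE : F ≠ E) (hXD : X ≠ D)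
    (hXE : X ≠ E) (hEl : E ∈ l) (hFl : F ∈ l) (hDde : D ∈ lde) (hEde : E ∈ lde)
    (hXde : X ∈ lde) (hBbc : B ∈ lbc) (hCbc : C ∈ lbc) (hYbc : Y ∈ lbc) (hYl : Y ∈ l)
    (hXxy : X ∈ lxy) (hYxy : Y ∈ lxy) (hCcd : C ∈ lcd) (hDcd : D ∈ lcd) (hWcd : W ∈ lcd)
    (hWxy : W ∈ lxy) :
    W ∉ lde ∧ W ∉ l := by
  have hdel : lde ≠ l :=
    ne_of_mem_of_not_mem' hDde (hκ.not_mem hE hF hD hFE.symm hDE.symm hFD hEl hFl)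
  constructor
  · intro hWde
    have hWD : W = D := point_eq_of_mem
      (ne_of_mem_of_not_mem' hCcd (hκ.not_mem hD hE hC hDE hCD.symm hCE.symm hDde hEde))
      hWcd hWde hDcd hDde
    have hxy : lxy = lde := line_eq_of_mem hXD hXxy (hWD ▸ hWxy) hXde hDde
    have hYE : Y = E := point_eq_of_mem hdel (hxy ▸ hYxy) hYl hEde hEl
    exact hκ.not_mem hB hC hE hBC hBE hCE hBbc hCbc (hYE ▸ hYbc)
  · intro hWl
    have hWY : W = Y := point_eq_of_mem
      (ne_of_mem_of_not_mem' hXxy fun h => hXE (point_eq_of_mem hdel hXde h hEde hEl))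
      hWxy hWl hYxy hYl
    have hYC : Y = C := point_eq_of_mem
      (ne_of_mem_of_not_mem' hBbc (hκ.not_mem hC hD hB hCD hBC.symm hBD.symm hCcd hDcd))
      hYbc (hWY ▸ hWcd) hCbc hCcd
    exact hκ.not_mem hE hF hC hFE.symm hCE.symm hFC hEl hFl (hYC ▸ hYl)

theorem col_of_isElemInv {σ : {k : L // A ∈ k} → {k : L // C ∈ k}} (hσF : Carries σ F)
    (hAde : A ∉ lde) (hFde : F ∉ lde) (hCl : C ∉ l) (hFl : F ∈ l)
    (hσ : IsElemInv P L W lde (elemInv W l ∘ elemMap C l ∘ σ ∘ elemInv A lde)) :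
    Col P L A F W := by
  set M : {M : P // M ∈ lde} := ⟨meet P (join L A F) lde, meet_mem_right _ _⟩
  have hFAM : F ∈ join L A M :=
    join_eq (ne_of_mem_of_not_mem M.2 hAde).symm (left_mem_join _ _) (meet_mem_left _ _) ▸
      right_mem_join A F
  have hMWF : (M : P) ∈ join L W F := by
    have hM : (M : P) ∈ join L W (meet P (σ (elemInv A lde M) : L) l) := hσ.2 M
    rwa [meet_eq (ne_of_mem_of_not_mem' (σ _).2 hCl) (hσF _ hFAM) hFl] at hM
  have hWF : join L W F = join L A F := line_eq_of_mem (ne_of_mem_of_not_mem M.2 hFde) hMWF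
    (right_mem_join _ _) (meet_mem_left _ _) (right_mem_join _ _)
  exact ⟨join L A F, left_mem_join _ _, right_mem_join _ _, hWF ▸ left_mem_join _ _⟩

theorem isElemInv_of_carries (hT : AxiomT P L) {σ : {k : L // A ∈ k} → {k : L // C ∈ k}}
    (hσ : IsProj P L (.pencil A) (.pencil C) σ) (hσB : Carries σ B) (hσD : Carries σ D)
    (hσE : Carries σ E) (hAde : A ∉ lde) (hBl : B ∉ l) (hCl : C ∉ l) (hWde : W ∉ lde)
    (hWl : W ∉ l) (hBC : B ≠ C) (hCD : C ≠ D) (hCE : C ≠ E) (hDE : D ≠ E) (hXD : X ≠ D)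
    (hXE : X ≠ E) (hEl : E ∈ l) (hAab : A ∈ lab) (hBab : B ∈ lab) (hDde : D ∈ lde)
    (hEde : E ∈ lde) (hXab : X ∈ lab) (hXde : X ∈ lde) (hBbc : B ∈ lbc) (hCbc : C ∈ lbc)
    (hYbc : Y ∈ lbc) (hYl : Y ∈ l) (hXxy : X ∈ lxy) (hYxy : Y ∈ lxy) (hCcd : C ∈ lcd)
    (hDcd : D ∈ lcd) (hWcd : W ∈ lcd) (hWxy : W ∈ lxy) :
    IsElemInv P L W lde (elemInv W l ∘ elemMap C l ∘ σ ∘ elemInv A lde) := by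
  set h := elemInv W l ∘ elemMap C l ∘ σ ∘ elemInv A lde
  have hσM : ∀ (M : {M : P // M ∈ lde}) {Q : P}, Carries σ Q → C ≠ Q → Q ∈ join L A M →
      (h M : L) = join L W (meet P (join L C Q) l) := fun M Q hσQ hCQ hQM => by
    change join L W (meet P (σ (elemInv A lde M) : L) l) = _
    rw [join_eq hCQ (σ _).2 (hσQ (elemInv A lde M) hQM)]
  have hfixD : D ∈ (h ⟨D, hDde⟩ : L) := by
    rw [hσM _ hσD hCD (right_mem_join _ _), join_eq hCD hCcd hDcd,
      join_eq (ne_of_mem_of_not_mem (meet_mem_right _ _) hWl).symm hWcd (meet_mem_left _ _)]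
    exact hDcd
  have hfixE : E ∈ (h ⟨E, hEde⟩ : L) := by
    rw [hσM _ hσE hCE (right_mem_join _ _),
      meet_eq (ne_of_mem_of_not_mem' (left_mem_join C E) hCl) (right_mem_join _ _) hEl]
    exact right_mem_join _ _
  have hfixX : X ∈ (h ⟨X, hXde⟩ : L) := by
    have hBAX : B ∈ join L A X :=
      join_eq (ne_of_mem_of_not_mem hXde hAde).symm hAab hXab ▸ hBab
    rw [hσM _ hσB hBC.symm hBAX, join_eq hBC.symm hCbc hBbc,
      meet_eq (ne_of_mem_of_not_mem' hBbc hBl) hYbc hYl,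
      join_eq (ne_of_mem_of_not_mem hYl hWl).symm hWxy hYxy]
    exact hXxy
  exact hT.isElemInv_of_three hWde ((((isProj_elemInv hAde).comp hσ).comp
    (isProj_elemMap hCl)).comp (isProj_elemInv hWl)) (X₁ := ⟨D, hDde⟩) (X₂ := ⟨E, hEde⟩)
    (X₃ := ⟨X, hXde⟩) (fun e => hDE (congrArg Subtype.val e))
    (fun e => hXD (congrArg Subtype.val e).symm) (fun e => hXE (congrArg Subtype.val e).symm)
    hfixD hfixE hfixX

theorem IsArc.pascal (hT : AxiomT P L) (hκ : IsArc L κ) (hA : A ∈ κ) (hB : B ∈ κ) (hC : C ∈ κ)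
    (hD : D ∈ κ) (hE : E ∈ κ) (hF : F ∈ κ) (hAB : A ≠ B) (hAD : A ≠ D) (hAE : A ≠ E)
    (hBC : B ≠ C) (hBD : B ≠ D) (hBE : B ≠ E) (hCD : C ≠ D) (hCE : C ≠ E) (hDE : D ≠ E)
    (hFA : F ≠ A) (hFB : F ≠ B) (hFC : F ≠ C) (hFD : F ≠ D) (hFE : F ≠ E)
    {σ : {k : L // A ∈ k} → {k : L // C ∈ k}} (hσ : IsProj P L (.pencil A) (.pencil C) σ)
    (hσκ : ∀ Q ∈ κ, Q ≠ A → Q ≠ C → Carries σ Q) (hEl : E ∈ l) (hFl : F ∈ l)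
    (hAab : A ∈ lab) (hBab : B ∈ lab) (hDde : D ∈ lde) (hEde : E ∈ lde) (hXab : X ∈ lab)
    (hXde : X ∈ lde) (hBbc : B ∈ lbc) (hCbc : C ∈ lbc) (hYbc : Y ∈ lbc) (hYl : Y ∈ l)
    (hXxy : X ∈ lxy) (hYxy : Y ∈ lxy) (hCcd : C ∈ lcd) (hDcd : D ∈ lcd) (hWcd : W ∈ lcd)
    (hWxy : W ∈ lxy) :
    Col P L A F W := by
  have hXD : X ≠ D := fun h => hκ.not_mem hA hB hD hAB hAD hBD hAab hBab (h ▸ hXab)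
  have hXE : X ≠ E := fun h => hκ.not_mem hA hB hE hAB hAE hBE hAab hBab (h ▸ hXab)
  obtain ⟨hWde, hWl⟩ := hκ.pascal_center_not_mem hB hC hD hE hF hBC hBD hBE hCD hCE hDE hFC hFD
    hFE hXD hXE hEl hFl hDde hEde hXde hBbc hCbc hYbc hYl hXxy hYxy hCcd hDcd hWcd hWxy
  have hAde : A ∉ lde := hκ.not_mem hD hE hA hDE hAD.symm hAE.symm hDde hEde
  have hCl : C ∉ l := hκ.not_mem hE hF hC hFE.symm hCE.symm hFC hEl hFl
  refine col_of_isElemInv (hσκ F hF hFA hFC) hAde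
    (hκ.not_mem hD hE hF hDE hFD.symm hFE.symm hDde hEde) hCl hFl ?_
  exact isElemInv_of_carries hT hσ (hσκ B hB hAB.symm hBC) (hσκ D hD hAD.symm hCD.symm)
    (hσκ E hE hAE.symm hCE.symm) hAde (hκ.not_mem hE hF hB hFE.symm hBE.symm hFB hEl hFl) hCl
    hWde hWl hBC hCD hCE hDE hXD hXE hEl hAab hBab hDde hEde hXab hXde hBbc hCbc hYbc hYl hXxy
    hYxy hCcd hDcd hWcd hWxy

end Pascal

end Configuration.ProjectivePlane

open Configuration.ProjectivePlane

theorem pascal_corollary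
    [Configuration.ProjectivePlane P L]
    (hT : AxiomT P L)
    (κ : Set P) (hκ : IsConic P L κ)
    (A B C D E : P)
    (hAκ : A ∈ κ) (hBκ : B ∈ κ) (hCκ : C ∈ κ) (hDκ : D ∈ κ) (hEκ : E ∈ κ)
    (hAB : A ≠ B) (hAC : A ≠ C) (hAD : A ≠ D) (hAE : A ≠ E)
    (hBC : B ≠ C) (hBD : B ≠ D) (hBE : B ≠ E)
    (hCD : C ≠ D) (hCE : C ≠ E) (hDE : D ≠ E)
    (l : L) (hEl : E ∈ l) (hAl : A ∉ l)
    (F : P) (hFκ : F ∈ κ) (hFl : F ∈ l)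
    (hFA : F ≠ A) (hFB : F ≠ B) (hFC : F ≠ C) (hFD : F ≠ D) (hFE : F ≠ E) :
    ∀ lab lde : L, A ∈ lab → B ∈ lab → D ∈ lde → E ∈ lde →
      ∀ X : P, X ∈ lab → X ∈ lde →
        ∀ lbc : L, B ∈ lbc → C ∈ lbc →
          ∀ Y : P, Y ∈ lbc → Y ∈ l →
            ∀ lxy : L, X ∈ lxy → Y ∈ lxy →
              ∀ lcd : L, C ∈ lcd → D ∈ lcd →
                ∀ W : P, W ∈ lcd → W ∈ lxy →
                  ∀ law : L, A ∈ law → W ∈ law →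
                    law ≠ l ∧ F ∈ law := by
  intro lab lde hAab hBab hDde hEde X hXab hXde lbc hBbc hCbc Y hYbc hYl lxy hXxy hYxy lcd hCcd
    hDcd W hWcd hWxy law hAlaw hWlaw
  have hκarc := hκ.isArc hT
  obtain ⟨σ, hσ, hσκ⟩ := hκ.exists_carries hT
    (Set.four_le_encard_of_ne hBκ hDκ hEκ hFκ hBD hBE hFB.symm hDE hFD.symm hFE.symm) hAκ hCκ
  obtain ⟨m, hAm, hFm, hWm⟩ := hκarc.pascal hT hAκ hBκ hCκ hDκ hEκ hFκ hAB hAD hAE hBC hBD hBE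
    hCD hCE hDE hFA hFB hFC hFD hFE hσ hσκ hEl hFl hAab hBab hDde hEde hXab hXde hBbc hCbc hYbc
    hYl hXxy hYxy hCcd hDcd hWcd hWxy
  have hAW : A ≠ W :=
    (ne_of_mem_of_not_mem hWcd (hκarc.not_mem hCκ hDκ hAκ hCD hAC.symm hAD.symm hCcd hDcd)).symm
  exact ⟨ne_of_mem_of_not_mem' hAlaw hAl, line_eq_of_mem hAW hAm hWm hAlaw hWlaw ▸ hFm⟩
end

section
/- Any three distinct points of a conic are noncollinear. -/
open Configuration

universe u
variable (P L : Type u) [Membership P L]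

/-!
Suppose three distinct points of the conic `κ(π;U,V)` lie on a line `g`. If `U ∈ g`, every point
`A ≠ U` of the conic on `g` comes from the line `UA = g`, so it is the single point `g·π(g)`; dually
if `V ∈ g`, using that `π` is injective. Otherwise `X ↦ π(UX)·g` is a projectivity of the range
of `g` whose fixed points are the conic points on `g`; by Axiom T it is the identity. At
`W = g·UV` this says `W ∈ π(UV)`, so `π(UV) = VW = UV`, contradicting nonperspectivity.
-/

open Configuration.Nondegenerate Configuration.HasPoints Configuration.HasLines

variable {P L}

theorem Set.not_subsingleton_diff_singleton {α : Type*} {s : Set α} {x y z : α}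
    (hx : x ∈ s) (hy : y ∈ s) (hz : z ∈ s) (hxy : x ≠ y) (hxz : x ≠ z) (hyz : y ≠ z) (u : α) :
    ¬ (s \ {u}).Subsingleton := by
  intro h
  by_cases hxu : x = u
  · exact hyz (h ⟨hy, fun hyu => hxy (hxu.trans hyu.symm)⟩
      ⟨hz, fun hzu => hxz (hxu.trans hzu.symm)⟩)
  by_cases hyu : y = u
  · exact hxz (h ⟨hx, hxu⟩ ⟨hz, fun hzu => hyz (hyu.trans hzu.symm)⟩)
  exact hxy (h ⟨hx, hxu⟩ ⟨hy, hyu⟩)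

section Nondegenerate

variable [Configuration.Nondegenerate P L]

theorem lines_eq_of_ne {A B : P} {l m : L} (hAB : A ≠ B)
    (hAl : A ∈ l) (hBl : B ∈ l) (hAm : A ∈ m) (hBm : B ∈ m) : l = m :=
  (eq_or_eq hAl hBl hAm hBm).resolve_left hAB

theorem points_eq_of_ne {A B : P} {l m : L} (hlm : l ≠ m)
    (hAl : A ∈ l) (hBl : B ∈ l) (hAm : A ∈ m) (hBm : B ∈ m) : A = B :=
  (eq_or_eq hAl hBl hAm hBm).resolve_right hlm

theorem isProj_injective {a b : Obj P L} {f : a.Carrier → b.Carrier} (h : IsProj P L a b f) :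
    Function.Injective f := by
  induction h with
  | @persp l m f h =>
    obtain ⟨O, hOl, hOm, hf⟩ := h
    intro X Y hXY
    obtain ⟨k, hOk, hXk, hfXk⟩ := hf X
    obtain ⟨k', hOk', hYk', hfYk'⟩ := hf Y
    rw [← hXY] at hfYk'
    have hkk' : k = k' := lines_eq_of_ne (ne_of_mem_of_not_mem (f X).2 hOm) hfXk hOk hfYk' hOk'
    subst hkk'
    exact Subtype.ext (points_eq_of_ne (ne_of_mem_of_not_mem' hOk hOl) hXk hYk' X.2 Y.2)
  | @elem U l f h =>
    obtain ⟨hUl, hf⟩ := h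
    intro k k' hkk'
    have hfk : (f k : P) ∈ (k' : L) := hkk' ▸ hf k'
    exact Subtype.ext (lines_eq_of_ne (ne_of_mem_of_not_mem (f k).2 hUl) (hf k) k.2 hfk k'.2)
  | @elemInv U l f h =>
    obtain ⟨hUl, hf⟩ := h
    intro X Y hXY
    have hY : (Y : P) ∈ (f X : L) := hXY ▸ hf Y
    exact Subtype.ext (points_eq_of_ne (ne_of_mem_of_not_mem' (f X).2 hUl) (hf X) hY X.2 Y.2)
  | comp _ _ ih₁ ih₂ => exact ih₂.comp ih₁

variable {U V : P} {π : {k : L // U ∈ k} → {k : L // V ∈ k}} {g : L}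

theorem conicSet_inter_diff_left_subsingleton (hnp : ∀ k, (π k : L) ≠ k) (hUg : U ∈ g) :
    ((conicSet P L U V π ∩ {A | A ∈ g}) \ {U}).Subsingleton := by
  rintro A ⟨⟨⟨k, hAk, hAπ⟩, hAg⟩, hAU⟩ B ⟨⟨⟨k', hBk', hBπ'⟩, hBg⟩, hBU⟩
  have hkg : (k : L) = g := lines_eq_of_ne hAU hAk k.2 hAg hUg
  have hk'k : k' = k := Subtype.ext ((lines_eq_of_ne hBU hBk' k'.2 hBg hUg).trans hkg.symm)
  subst hk'k
  exact points_eq_of_ne (fun h => hnp k' (h.trans hkg.symm)) hAπ hBπ' hAg hBg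

theorem conicSet_inter_diff_right_subsingleton (hπ : Function.Injective π)
    (hnp : ∀ k, (π k : L) ≠ k) (hVg : V ∈ g) :
    ((conicSet P L U V π ∩ {A | A ∈ g}) \ {V}).Subsingleton := by
  rintro A ⟨⟨⟨k, hAk, hAπ⟩, hAg⟩, hAV⟩ B ⟨⟨⟨k', hBk', hBπ'⟩, hBg⟩, hBV⟩
  have hπkg : (π k : L) = g := lines_eq_of_ne hAV hAπ (π k).2 hAg hVg
  have hk'k : k' = k :=
    hπ (Subtype.ext ((lines_eq_of_ne hBV hBπ' (π k').2 hBg hVg).trans hπkg.symm))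
  subst hk'k
  exact points_eq_of_ne (fun h => hnp k' (hπkg.trans h.symm)) hAk hBk' hAg hBg

end Nondegenerate

section ProjectivePlane

variable [Configuration.ProjectivePlane P L] {U V : P} {g : L}

noncomputable def rangeToPencil (hU : U ∉ g) (A : {A : P // A ∈ g}) : {k : L // U ∈ k} :=
  ⟨mkLine (ne_of_mem_of_not_mem A.2 hU).symm, (mkLine_ax _).1⟩

noncomputable def pencilToRange (hV : V ∉ g) (k : {k : L // V ∈ k}) : {A : P // A ∈ g} :=
  ⟨mkPoint (ne_of_mem_of_not_mem' k.2 hV), (mkPoint_ax _).2⟩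

theorem mem_rangeToPencil (hU : U ∉ g) (A : {A : P // A ∈ g}) :
    (A : P) ∈ (rangeToPencil hU A : L) :=
  (mkLine_ax _).2

theorem mem_pencilToRange (hV : V ∉ g) (k : {k : L // V ∈ k}) :
    (pencilToRange hV k : P) ∈ (k : L) :=
  (mkPoint_ax _).1

theorem rangeToPencil_eq (hU : U ∉ g) {A : {A : P // A ∈ g}} {k : {k : L // U ∈ k}}
    (hA : (A : P) ∈ (k : L)) : rangeToPencil hU A = k :=
  Subtype.ext (lines_eq_of_ne (ne_of_mem_of_not_mem A.2 hU).symm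
    (rangeToPencil hU A).2 (mem_rangeToPencil hU A) k.2 hA)

theorem pencilToRange_eq (hV : V ∉ g) {k : {k : L // V ∈ k}} {A : {A : P // A ∈ g}}
    (hA : (A : P) ∈ (k : L)) : pencilToRange hV k = A :=
  Subtype.ext (points_eq_of_ne (ne_of_mem_of_not_mem' k.2 hV)
    (mem_pencilToRange hV k) hA (pencilToRange hV k).2 A.2)

noncomputable def conicRangeMap (π : {k : L // U ∈ k} → {k : L // V ∈ k}) (hU : U ∉ g)
    (hV : V ∉ g) : {A : P // A ∈ g} → {A : P // A ∈ g} :=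
  pencilToRange hV ∘ π ∘ rangeToPencil hU

variable {π : {k : L // U ∈ k} → {k : L // V ∈ k}} (hU : U ∉ g) (hV : V ∉ g)

theorem isProj_conicRangeMap (hπ : IsProj P L (.pencil U) (.pencil V) π) :
    IsProj P L (.range g) (.range g) (conicRangeMap π hU hV) :=
  .comp (.comp (.elemInv ⟨hU, mem_rangeToPencil hU⟩) hπ) (.elem ⟨hV, mem_pencilToRange hV⟩)

theorem conicRangeMap_eq_self {A : {A : P // A ∈ g}} (hA : (A : P) ∈ conicSet P L U V π) :
    conicRangeMap π hU hV A = A := by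
  obtain ⟨k, hAk, hAπk⟩ := hA
  change pencilToRange hV (π (rangeToPencil hU A)) = A
  rw [rangeToPencil_eq hU hAk]
  exact pencilToRange_eq hV hAπk

theorem exists_conicRangeMap_ne_self (hUV : U ≠ V) (hnp : ∀ k, (π k : L) ≠ k) :
    ∃ A, conicRangeMap π hU hV A ≠ A := by
  have hUVg : mkLine hUV ≠ g := ne_of_mem_of_not_mem' (mkLine_ax hUV).1 hU
  let W : {A : P // A ∈ g} := ⟨mkPoint hUVg, (mkPoint_ax hUVg).2⟩
  refine ⟨W, fun hW => ?_⟩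
  let k : {k : L // U ∈ k} := ⟨mkLine hUV, (mkLine_ax hUV).1⟩
  have hWk : (W : P) ∈ (k : L) := (mkPoint_ax hUVg).1
  have hWπk : (W : P) ∈ (π k : L) := by
    have h : (conicRangeMap π hU hV W : P) ∈ (π (rangeToPencil hU W) : L) :=
      mem_pencilToRange hV _
    rwa [hW, rangeToPencil_eq hU hWk] at h
  have hVW : V ≠ W := (ne_of_mem_of_not_mem W.2 hV).symm
  exact hnp k (lines_eq_of_ne hVW (π k).2 hWπk (mkLine_ax hUV).2 hWk)

end ProjectivePlane

theorem conic_three_points_noncollinear_general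
    [Configuration.ProjectivePlane P L]
    (hT : AxiomT P L)
    (κ : Set P) (hκ : IsConic P L κ)
    (X Y Z : P) (hX : X ∈ κ) (hY : Y ∈ κ) (hZ : Z ∈ κ)
    (hXY : X ≠ Y) (hXZ : X ≠ Z) (hYZ : Y ≠ Z) :
    ¬ Col P L X Y Z := by
  rintro ⟨g, hXg, hYg, hZg⟩
  obtain ⟨U, V, π, hUV, hπ, hnp, rfl⟩ := hκ
  have hXYZ := Set.not_subsingleton_diff_singleton (s := conicSet P L U V π ∩ {A | A ∈ g})
    ⟨hX, hXg⟩ ⟨hY, hYg⟩ ⟨hZ, hZg⟩ hXY hXZ hYZ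
  by_cases hU : U ∈ g
  · exact hXYZ U (conicSet_inter_diff_left_subsingleton hnp hU)
  by_cases hV : V ∈ g
  · exact hXYZ V (conicSet_inter_diff_right_subsingleton (isProj_injective hπ) hnp hV)
  obtain ⟨W, hW⟩ := exists_conicRangeMap_ne_self hU hV hUV hnp
  refine hW (hT _ _ (isProj_conicRangeMap hU hV hπ) ?_ W)
  exact ⟨⟨X, hXg⟩, ⟨Y, hYg⟩, ⟨Z, hZg⟩, ne_of_apply_ne Subtype.val hXY,
    ne_of_apply_ne Subtype.val hXZ, ne_of_apply_ne Subtype.val hYZ,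
    conicRangeMap_eq_self hU hV hX, conicRangeMap_eq_self hU hV hY, conicRangeMap_eq_self hU hV hZ⟩

/-- **Any three distinct points of a conic are noncollinear.** -/
theorem conic_three_points_noncollinear
    [Configuration.ProjectivePlane P L]
    (h6 : LinesHaveAtLeast P L 6) (hT : AxiomT P L)
    (κ : Set P) (hκ : IsConic P L κ)
    (X Y Z : P) (hX : X ∈ κ) (hY : Y ∈ κ) (hZ : Z ∈ κ)
    (hXY : X ≠ Y) (hXZ : X ≠ Z) (hYZ : Y ≠ Z) :
    ¬ Col P L X Y Z :=
  conic_three_points_noncollinear_general hT κ hκ X Y Z hX hY hZ hXY hXZ hYZ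
end
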